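/- arXiv:math-ph/0503014 — 4 statements merged into one kernel-verified Lean document; each statement's English description precedes it below -/
import Mathlib

section
/- Every constant matrix K ∈ End(ℂ^N) satisfying K^t = εK for some ε ∈ {+1, −1} is a solution of the soliton non-preserving reflection equation: for all λ_a, λ_b ∈ ℂ such that λ_a − λ_b ≠ 0 and −λ_a − λ_b − ħρ ≠ 0, R(λ_a−λ_b) · (K ⊗ I) · R^{t₁}(−λ_a−λ_b−ħρ) · (I ⊗ K) = (I ⊗ K) · R^{t₁}(−λ_a−λ_b−ħρ) · (K ⊗ I) · R(λ_a−λ_b) as operators on ℂ^N ⊗ ℂ^N. -/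
open Matrix Finset

noncomputable section

/-- The permutation operator `P` exchanging the tensor factors `p` and `q`
of `(ℂ^N)^{⊗ I}`, realized on the index type `I → Fin N`. -/
def permOp (N : ℕ) {I : Type} [Fintype I] [DecidableEq I] (p q : I) :
    Matrix (I → Fin N) (I → Fin N) ℂ :=
  fun f g => if f = g ∘ ⇑(Equiv.swap p q) then 1 else 0

/-- The rational R-matrix `R(λ) = I - (ħ/λ) P` acting on the tensor factors
`p` and `q`. -/
def Rmat (N : ℕ) (hbar : ℂ) {I : Type} [Fintype I] [DecidableEq I] (p q : I)
    (lam : ℂ) : Matrix (I → Fin N) (I → Fin N) ℂ :=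
  1 - (hbar / lam) • permOp N p q

/-- The one-site operator acting as the `N × N` matrix `A` on the tensor
factor `p` and as the identity elsewhere. -/
def siteOp (N : ℕ) {I : Type} [Fintype I] [DecidableEq I] (p : I)
    (A : Matrix (Fin N) (Fin N) ℂ) : Matrix (I → Fin N) (I → Fin N) ℂ :=
  fun f g => if Function.update g p (f p) = f then A (f p) (g p) else 0

/-- Ordinary partial transposition in the tensor factor `p`. -/
def ptransp {N : ℕ} {I : Type} [Fintype I] [DecidableEq I] (p : I)
    (M : Matrix (I → Fin N) (I → Fin N) ℂ) : Matrix (I → Fin N) (I → Fin N) ℂ :=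
  fun f g => M (Function.update f p (g p)) (Function.update g p (f p))

/-- The generalized transposition `A ↦ V⁻¹ Aᵀ V` applied in the tensor
factor `p` only. -/
def gtransp {N : ℕ} {I : Type} [Fintype I] [DecidableEq I]
    (V : Matrix (Fin N) (Fin N) ℂ) (p : I)
    (M : Matrix (I → Fin N) (I → Fin N) ℂ) : Matrix (I → Fin N) (I → Fin N) ℂ :=
  siteOp N p V⁻¹ * ptransp p M * siteOp N p V

/-- The antidiagonal matrix with all antidiagonal entries `1` (the case `θ = 1`). -/
def Vplus (N : ℕ) : Matrix (Fin N) (Fin N) ℂ :=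
  fun i j => if (i : ℕ) + (j : ℕ) + 1 = N then 1 else 0

/-- For even `N`, the antidiagonal matrix `antidiag(1,…,1,−1,…,−1)` whose first
`N/2` antidiagonal entries are `1` and last `N/2` are `-1` (the case `θ = -1`). -/
def Vminus (N : ℕ) : Matrix (Fin N) (Fin N) ℂ :=
  fun i j => if (i : ℕ) + (j : ℕ) + 1 = N then (if 2 * (i : ℕ) < N then 1 else -1) else 0

open Matrix Finset

variable {N : ℕ}

/-- Kronecker-type product on two sites. -/
def kron (A B : Matrix (Fin N) (Fin N) ℂ) :
    Matrix (Fin 2 → Fin N) (Fin 2 → Fin N) ℂ :=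
  fun f g => A (f 0) (g 0) * B (f 1) (g 1)

/-- "Rank-one style" operator `W X Y`: entry `X (f 0) (f 1) * Y (g 0) (g 1)`. -/
def Wm (X Y : Matrix (Fin N) (Fin N) ℂ) :
    Matrix (Fin 2 → Fin N) (Fin 2 → Fin N) ℂ :=
  fun f g => X (f 0) (f 1) * Y (g 0) (g 1)

lemma sum_fun2 {α : Type} [AddCommMonoid α] (F : (Fin 2 → Fin N) → α) :
    ∑ h, F h = ∑ x : Fin N, ∑ y : Fin N, F ![x, y] := by
  have e1 : ∑ h, F h = ∑ p : Fin N × Fin N, F ![p.1, p.2] := by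
    apply Fintype.sum_equiv (piFinTwoEquiv fun _ => Fin N)
    intro h
    congr 1
    ext i
    fin_cases i <;> rfl
  rw [e1, Fintype.sum_prod_type]

lemma fun2_ext_iff {f g : Fin 2 → Fin N} : f = g ↔ f 0 = g 0 ∧ f 1 = g 1 := by
  rw [funext_iff, Fin.forall_fin_two]

lemma kron_mul (A B C D : Matrix (Fin N) (Fin N) ℂ) :
    kron A B * kron C D = kron (A * C) (B * D) := by
  ext f g
  simp only [Matrix.mul_apply, kron, sum_fun2]
  rw [Finset.sum_mul_sum]
  simp only [Matrix.cons_val_zero, Matrix.cons_val_one, Matrix.head_cons]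
  apply Finset.sum_congr rfl; intro x _
  apply Finset.sum_congr rfl; intro y _
  ring

lemma kron_one_one : kron (1 : Matrix (Fin N) (Fin N) ℂ) 1 = 1 := by
  ext f g
  simp only [kron, Matrix.one_apply, fun2_ext_iff]
  by_cases h0 : f 0 = g 0 <;> by_cases h1 : f 1 = g 1 <;> simp [h0, h1]

lemma siteOp_zero (A : Matrix (Fin N) (Fin N) ℂ) :
    siteOp N (0 : Fin 2) A = kron A 1 := by
  ext f g
  simp only [siteOp, kron, Matrix.one_apply]
  have h : Function.update g 0 (f 0) = f ↔ f 1 = g 1 := by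
    rw [fun2_ext_iff]
    simp [Function.update, eq_comm]
  rw [if_congr h rfl rfl]
  by_cases h : f 1 = g 1 <;> simp [h]

lemma siteOp_one (A : Matrix (Fin N) (Fin N) ℂ) :
    siteOp N (1 : Fin 2) A = kron 1 A := by
  ext f g
  simp only [siteOp, kron, Matrix.one_apply]
  have h : Function.update g 1 (f 1) = f ↔ f 0 = g 0 := by
    rw [fun2_ext_iff]
    simp [Function.update, eq_comm]
  rw [if_congr h rfl rfl]
  by_cases h : f 0 = g 0 <;> simp [h]

lemma comp_swap_eval (f : Fin 2 → Fin N) :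
    (f ∘ ⇑(Equiv.swap (0 : Fin 2) 1)) 0 = f 1 ∧ (f ∘ ⇑(Equiv.swap (0 : Fin 2) 1)) 1 = f 0 := by
  constructor <;> simp

lemma permOp_mul_apply (M : Matrix (Fin 2 → Fin N) (Fin 2 → Fin N) ℂ)
    (f g : Fin 2 → Fin N) :
    (permOp N (0 : Fin 2) 1 * M) f g = M (f ∘ ⇑(Equiv.swap (0 : Fin 2) 1)) g := by
  have key : ∀ h : Fin 2 → Fin N,
      (f = h ∘ ⇑(Equiv.swap (0 : Fin 2) 1)) ↔ h = f ∘ ⇑(Equiv.swap (0 : Fin 2) 1) := by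
    intro h
    constructor <;> intro e
    · funext i; rw [e]; simp
    · rw [e]; funext i; simp
  simp only [Matrix.mul_apply, permOp, key]
  simp

lemma mul_permOp_apply (M : Matrix (Fin 2 → Fin N) (Fin 2 → Fin N) ℂ)
    (f g : Fin 2 → Fin N) :
    (M * permOp N (0 : Fin 2) 1) f g = M f (g ∘ ⇑(Equiv.swap (0 : Fin 2) 1)) := by
  simp only [Matrix.mul_apply, permOp, mul_ite, mul_one, mul_zero]
  simp

lemma permOp_mul_kron (A B : Matrix (Fin N) (Fin N) ℂ) :
    permOp N (0 : Fin 2) 1 * kron A B = kron B A * permOp N (0 : Fin 2) 1 := by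
  ext f g
  rw [permOp_mul_apply, mul_permOp_apply]
  simp only [kron, Function.comp_apply, Equiv.swap_apply_left, Equiv.swap_apply_right]
  ring

lemma permOp_mul_Wm (X Y : Matrix (Fin N) (Fin N) ℂ) :
    permOp N (0 : Fin 2) 1 * Wm X Y = Wm Xᵀ Y := by
  ext f g
  rw [permOp_mul_apply]
  simp only [Wm, Matrix.transpose_apply, Function.comp_apply, Equiv.swap_apply_left,
    Equiv.swap_apply_right]

lemma Wm_mul_permOp (X Y : Matrix (Fin N) (Fin N) ℂ) :
    Wm X Y * permOp N (0 : Fin 2) 1 = Wm X Yᵀ := by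
  ext f g
  rw [mul_permOp_apply]
  simp only [Wm, Matrix.transpose_apply, Function.comp_apply, Equiv.swap_apply_left,
    Equiv.swap_apply_right]

lemma kron_mul_Wm (A B X Y : Matrix (Fin N) (Fin N) ℂ) :
    kron A B * Wm X Y = Wm (A * X * Bᵀ) Y := by
  ext f g
  simp only [Matrix.mul_apply, kron, Wm, Matrix.transpose_apply, sum_fun2,
    Matrix.cons_val_zero, Matrix.cons_val_one, Matrix.head_cons, Finset.sum_mul,
    Finset.mul_sum]
  rw [Finset.sum_comm]
  apply Finset.sum_congr rfl; intro x _
  apply Finset.sum_congr rfl; intro y _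
  ring

lemma Wm_mul_kron (X Y C D : Matrix (Fin N) (Fin N) ℂ) :
    Wm X Y * kron C D = Wm X (Cᵀ * Y * D) := by
  ext f g
  simp only [Matrix.mul_apply, kron, Wm, Matrix.transpose_apply, sum_fun2,
    Matrix.cons_val_zero, Matrix.cons_val_one, Matrix.head_cons, Finset.sum_mul,
    Finset.mul_sum]
  rw [Finset.sum_comm]
  apply Finset.sum_congr rfl; intro x _
  apply Finset.sum_congr rfl; intro y _
  ring

lemma Wm_smul_left (c : ℂ) (X Y : Matrix (Fin N) (Fin N) ℂ) :
    Wm (c • X) Y = c • Wm X Y := by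
  ext f g
  simp only [Wm, Matrix.smul_apply, smul_eq_mul]
  ring

lemma Wm_smul_right (c : ℂ) (X Y : Matrix (Fin N) (Fin N) ℂ) :
    Wm X (c • Y) = c • Wm X Y := by
  ext f g
  simp only [Wm, Matrix.smul_apply, smul_eq_mul]
  ring

lemma ptransp_one : ptransp (0 : Fin 2) (1 : Matrix (Fin 2 → Fin N) (Fin 2 → Fin N) ℂ) = 1 := by
  ext f g
  simp only [ptransp, Matrix.one_apply, fun2_ext_iff]
  simp [Function.update, eq_comm, and_comm]

lemma ptransp_permOp : ptransp (0 : Fin 2) (permOp N (0 : Fin 2) 1) = Wm 1 1 := by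
  ext f g
  simp only [ptransp, permOp, Wm, Matrix.one_apply, fun2_ext_iff]
  by_cases h0 : f 0 = f 1 <;> by_cases h1 : g 0 = g 1 <;>
    simp [Function.update, h0, h1, eq_comm]

lemma ptransp_sub (M M' : Matrix (Fin 2 → Fin N) (Fin 2 → Fin N) ℂ) :
    ptransp (0 : Fin 2) (M - M') = ptransp (0 : Fin 2) M - ptransp (0 : Fin 2) M' := rfl

lemma ptransp_smul (c : ℂ) (M : Matrix (Fin 2 → Fin N) (Fin 2 → Fin N) ℂ) :
    ptransp (0 : Fin 2) (c • M) = c • ptransp (0 : Fin 2) M := rfl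

lemma Vplus_transpose : (Vplus N)ᵀ = Vplus N := by
  ext i j
  simp only [Matrix.transpose_apply, Vplus]
  rw [Nat.add_comm (j : ℕ) (i : ℕ)]

lemma Vminus_transpose (hNe : Even N) : (Vminus N)ᵀ = (-1 : ℂ) • Vminus N := by
  obtain ⟨m, hm⟩ := hNe
  ext i j
  have hi := i.isLt
  have hj := j.isLt
  simp only [Matrix.transpose_apply, Vminus, Matrix.smul_apply, smul_eq_mul]
  by_cases h : (i : ℕ) + (j : ℕ) + 1 = N
  · have h' : (j : ℕ) + (i : ℕ) + 1 = N := by omega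
    rw [if_pos h', if_pos h]
    have : 2 * (j : ℕ) < N ↔ ¬ (2 * (i : ℕ) < N) := by omega
    by_cases hii : 2 * (i : ℕ) < N
    · rw [if_neg (by omega), if_pos hii]; all_goals ring
    · rw [if_pos (by omega), if_neg hii]; all_goals ring
  · have h' : ¬ ((j : ℕ) + (i : ℕ) + 1 = N) := by omega
    rw [if_neg h', if_neg h]; all_goals ring

lemma Vplus_sq (hN : 1 ≤ N) : Vplus N * Vplus N = 1 := by
  ext i j
  have hi := i.isLt
  have hj := j.isLt
  set r : Fin N := ⟨N - 1 - (i : ℕ), by omega⟩ with hr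
  rw [Matrix.mul_apply, Finset.sum_eq_single r]
  · have h1 : (i : ℕ) + (r : ℕ) + 1 = N := by simp [hr]; omega
    simp only [Vplus, if_pos h1, one_mul, Matrix.one_apply]
    have : ((r : ℕ) + (j : ℕ) + 1 = N) ↔ i = j := by
      rw [Fin.ext_iff]; simp [hr]; omega
    by_cases hij : i = j
    · rw [if_pos (this.mpr hij), if_pos hij]
    · rw [if_neg (fun hc => hij (this.mp hc)), if_neg hij]
  · intro k _ hk
    have : ¬ ((i : ℕ) + (k : ℕ) + 1 = N) := by
      intro hc
      apply hk
      rw [Fin.ext_iff]; simp [hr]; omega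
    simp [Vplus, this]
  · intro h; exact absurd (Finset.mem_univ r) h

lemma Vminus_sq (hNe : Even N) (hN : 1 ≤ N) : Vminus N * Vminus N = (-1 : ℂ) • 1 := by
  obtain ⟨m, hm⟩ := hNe
  ext i j
  have hi := i.isLt
  have hj := j.isLt
  set r : Fin N := ⟨N - 1 - (i : ℕ), by omega⟩ with hr
  rw [Matrix.mul_apply, Finset.sum_eq_single r]
  · have h1 : (i : ℕ) + (r : ℕ) + 1 = N := by simp [hr]; omega
    have h2 : ((r : ℕ) + (j : ℕ) + 1 = N) ↔ i = j := by
      rw [Fin.ext_iff]; simp [hr]; omega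
    simp only [Vminus, if_pos h1, Matrix.smul_apply, Matrix.one_apply, smul_eq_mul]
    have hsign : ¬ (2 * (r : ℕ) < N) ↔ 2 * (i : ℕ) < N := by simp [hr]; omega
    by_cases hij : i = j
    · rw [if_pos (h2.mpr hij), if_pos hij]
      by_cases hii : 2 * (i : ℕ) < N
      · rw [if_pos hii, if_neg (by omega)]; all_goals ring
      · rw [if_neg hii, if_pos (by omega)]; all_goals ring
    · rw [if_neg (fun hc => hij (h2.mp hc)), if_neg hij]; all_goals ring
  · intro k _ hk
    have : ¬ ((i : ℕ) + (k : ℕ) + 1 = N) := by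
      intro hc
      apply hk
      rw [Fin.ext_iff]; simp [hr]; omega
    simp [Vminus, this]
  · intro h; exact absurd (Finset.mem_univ r) h

lemma expand_prod (a b : ℂ) (X Y Z W : Matrix (Fin 2 → Fin N) (Fin 2 → Fin N) ℂ) :
    (X - a • Y) * (Z - b • W) =
      X * Z - b • (X * W) - a • (Y * Z) + (a * b) • (Y * W) := by
  simp only [sub_mul, mul_sub, smul_mul_assoc, mul_smul_comm, smul_smul, smul_sub]
  module

lemma core (a b θ ε : ℂ) (hθ2 : θ * θ = 1) (hε2 : ε * ε = 1)
    (V K : Matrix (Fin N) (Fin N) ℂ)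
    (hVT : Vᵀ = θ • V)
    (hKV : Kᵀ * V = ε • (V * K)) (hVK : V * Kᵀ = ε • (K * V)) :
    (1 - a • permOp N (0 : Fin 2) 1) * kron K 1 * (1 - b • Wm V V) * kron 1 K =
      kron (1 : Matrix (Fin N) (Fin N) ℂ) K * (1 - b • Wm V V) * kron K 1 *
        (1 - a • permOp N (0 : Fin 2) 1) := by
  have hA : (1 - a • permOp N (0 : Fin 2) 1) * kron K 1 =
      kron K 1 - a • (kron 1 K * permOp N (0 : Fin 2) 1) := by
    rw [sub_mul, one_mul, smul_mul_assoc, permOp_mul_kron]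
  have hB : (1 - b • Wm V V) * kron (1 : Matrix (Fin N) (Fin N) ℂ) K =
      kron 1 K - b • Wm V (V * K) := by
    rw [sub_mul, one_mul, smul_mul_assoc, Wm_mul_kron, Matrix.transpose_one, Matrix.one_mul]
  have hC : kron (1 : Matrix (Fin N) (Fin N) ℂ) K * (1 - b • Wm V V) =
      kron 1 K - b • Wm (V * Kᵀ) V := by
    rw [mul_sub, mul_one, mul_smul_comm, kron_mul_Wm, Matrix.one_mul]
  have hD : kron K (1 : Matrix (Fin N) (Fin N) ℂ) * (1 - a • permOp N (0 : Fin 2) 1) =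
      kron K 1 - a • (kron K 1 * permOp N (0 : Fin 2) 1) := by
    rw [mul_sub, mul_one, mul_smul_comm]
  have e1 : kron K (1 : Matrix (Fin N) (Fin N) ℂ) * kron (1 : Matrix (Fin N) (Fin N) ℂ) K =
      kron K K := by rw [kron_mul, Matrix.mul_one, Matrix.one_mul]
  have e1' : kron (1 : Matrix (Fin N) (Fin N) ℂ) K * kron K (1 : Matrix (Fin N) (Fin N) ℂ) =
      kron K K := by rw [kron_mul, Matrix.mul_one, Matrix.one_mul]
  have e2 : kron K (1 : Matrix (Fin N) (Fin N) ℂ) * Wm V (V * K) = Wm (K * V) (V * K) := by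
    rw [kron_mul_Wm, Matrix.transpose_one, Matrix.mul_one]
  have e3 : kron (1 : Matrix (Fin N) (Fin N) ℂ) K * permOp N (0 : Fin 2) 1 *
      kron (1 : Matrix (Fin N) (Fin N) ℂ) K = kron K K * permOp N (0 : Fin 2) 1 := by
    rw [mul_assoc, permOp_mul_kron, ← mul_assoc, e1']
  have e4 : kron (1 : Matrix (Fin N) (Fin N) ℂ) K * permOp N (0 : Fin 2) 1 * Wm V (V * K) =
      (θ * ε) • Wm (K * V) (V * K) := by
    rw [mul_assoc, permOp_mul_Wm, hVT, Wm_smul_left, mul_smul_comm, kron_mul_Wm,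
      Matrix.one_mul, hVK, Wm_smul_left, smul_smul]
  have e5 : kron (1 : Matrix (Fin N) (Fin N) ℂ) K *
      (kron K (1 : Matrix (Fin N) (Fin N) ℂ) * permOp N (0 : Fin 2) 1) =
      kron K K * permOp N (0 : Fin 2) 1 := by
    rw [← mul_assoc, e1']
  have e6 : Wm (V * Kᵀ) V * kron K (1 : Matrix (Fin N) (Fin N) ℂ) = Wm (K * V) (V * K) := by
    rw [Wm_mul_kron, Matrix.mul_one, hVK, hKV, Wm_smul_left, Wm_smul_right, smul_smul, hε2,
      one_smul]
  have e7 : Wm (V * Kᵀ) V * (kron K (1 : Matrix (Fin N) (Fin N) ℂ) * permOp N (0 : Fin 2) 1) =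
      (θ * ε) • Wm (K * V) (V * K) := by
    rw [← mul_assoc, e6, Wm_mul_permOp, Matrix.transpose_mul, hVT, mul_smul_comm, hKV,
      smul_smul, Wm_smul_right]
  calc (1 - a • permOp N (0 : Fin 2) 1) * kron K 1 * (1 - b • Wm V V) * kron 1 K
      = ((1 - a • permOp N (0 : Fin 2) 1) * kron K 1) * ((1 - b • Wm V V) * kron 1 K) := by
        rw [mul_assoc]
    _ = (kron K 1 - a • (kron 1 K * permOp N (0 : Fin 2) 1)) *
        (kron 1 K - b • Wm V (V * K)) := by rw [hA, hB]
    _ = (kron 1 K - b • Wm (V * Kᵀ) V) *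
        (kron K 1 - a • (kron K 1 * permOp N (0 : Fin 2) 1)) := by
        rw [expand_prod, expand_prod, e1, e1', e2, e3, e4, e5, e6, e7, smul_smul, smul_smul]
        module
    _ = kron (1 : Matrix (Fin N) (Fin N) ℂ) K * (1 - b • Wm V V) * kron K 1 *
        (1 - a • permOp N (0 : Fin 2) 1) := by
        rw [hC, mul_assoc, hD]

/-- every constant matrix `K` with `K^t = εK` (ε = ±1, the
generalized transposition being `A^t = V⁻¹AᵀV`) solves the soliton
non-preserving reflection equation. -/
theorem snp_reflection_of_twisted_symmetric (N : ℕ) (hN : 2 ≤ N)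
    (hbar : ℂ) (hhbar : hbar ≠ 0) (ρ : ℂ)
    (V : Matrix (Fin N) (Fin N) ℂ)
    (hV : V = Vplus N ∨ (Even N ∧ V = Vminus N))
    (K : Matrix (Fin N) (Fin N) ℂ) (ε : ℂ) (hε : ε = 1 ∨ ε = -1)
    (hK : V⁻¹ * Kᵀ * V = ε • K)
    (lama lamb : ℂ) (h1 : lama - lamb ≠ 0) (h2 : -lama - lamb - hbar * ρ ≠ 0) :
    Rmat N hbar (0 : Fin 2) 1 (lama - lamb) * siteOp N (0 : Fin 2) K *
        gtransp V (0 : Fin 2) (Rmat N hbar (0 : Fin 2) 1 (-lama - lamb - hbar * ρ)) *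
        siteOp N (1 : Fin 2) K =
      siteOp N (1 : Fin 2) K *
        gtransp V (0 : Fin 2) (Rmat N hbar (0 : Fin 2) 1 (-lama - lamb - hbar * ρ)) *
        siteOp N (0 : Fin 2) K * Rmat N hbar (0 : Fin 2) 1 (lama - lamb) := by
  have hN1 : 1 ≤ N := by omega
  have hε2 : ε * ε = 1 := by rcases hε with h | h <;> rw [h] <;> norm_num
  obtain ⟨θ, hθ2, hVT, hVV⟩ : ∃ θ : ℂ, θ * θ = 1 ∧ Vᵀ = θ • V ∧
      V * V = θ • (1 : Matrix (Fin N) (Fin N) ℂ) := by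
    rcases hV with h | ⟨hNe, h⟩
    · refine ⟨1, by norm_num, ?_, ?_⟩
      · rw [h, Vplus_transpose, one_smul]
      · rw [h, Vplus_sq hN1, one_smul]
    · refine ⟨-1, by norm_num, ?_, ?_⟩
      · rw [h, Vminus_transpose hNe]
      · rw [h, Vminus_sq hNe hN1]
  have hVinv : V⁻¹ = θ • V := Matrix.inv_eq_right_inv (by
    rw [mul_smul_comm, hVV, smul_smul, hθ2, one_smul])
  have hVKV : V * Kᵀ * V = (θ * ε) • K := by
    have h' : θ • (V * Kᵀ * V) = ε • K := by
      rw [hVinv, smul_mul_assoc, smul_mul_assoc] at hK; exact hK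
    calc V * Kᵀ * V = θ • (θ • (V * Kᵀ * V)) := by rw [smul_smul, hθ2, one_smul]
      _ = θ • (ε • K) := by rw [h']
      _ = (θ * ε) • K := by rw [smul_smul]
  have hKV : Kᵀ * V = ε • (V * K) := by
    have e2 : θ • (Kᵀ * V) = (θ * ε) • (V * K) := by
      calc θ • (Kᵀ * V) = (θ • (1 : Matrix (Fin N) (Fin N) ℂ)) * (Kᵀ * V) := by
            rw [smul_mul_assoc, one_mul]
        _ = V * V * (Kᵀ * V) := by rw [hVV]
        _ = V * (V * Kᵀ * V) := by simp only [mul_assoc]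
        _ = V * ((θ * ε) • K) := by rw [hVKV]
        _ = (θ * ε) • (V * K) := by rw [mul_smul_comm]
    calc Kᵀ * V = θ • (θ • (Kᵀ * V)) := by rw [smul_smul, hθ2, one_smul]
      _ = θ • ((θ * ε) • (V * K)) := by rw [e2]
      _ = ε • (V * K) := by rw [smul_smul, ← mul_assoc, hθ2, one_mul]
  have hVK : V * Kᵀ = ε • (K * V) := by
    have e2 : θ • (V * Kᵀ) = (θ * ε) • (K * V) := by
      calc θ • (V * Kᵀ) = (V * Kᵀ) * (θ • (1 : Matrix (Fin N) (Fin N) ℂ)) := by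
            rw [mul_smul_comm, mul_one]
        _ = V * Kᵀ * (V * V) := by rw [hVV]
        _ = (V * Kᵀ * V) * V := by simp only [mul_assoc]
        _ = ((θ * ε) • K) * V := by rw [hVKV]
        _ = (θ * ε) • (K * V) := by rw [smul_mul_assoc]
    calc V * Kᵀ = θ • (θ • (V * Kᵀ)) := by rw [smul_smul, hθ2, one_smul]
      _ = θ • ((θ * ε) • (K * V)) := by rw [e2]
      _ = ε • (K * V) := by rw [smul_smul, ← mul_assoc, hθ2, one_mul]
  have hG : gtransp V (0 : Fin 2) (Rmat N hbar (0 : Fin 2) 1 (-lama - lamb - hbar * ρ)) =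
      1 - (hbar / (-lama - lamb - hbar * ρ)) • Wm V V := by
    unfold gtransp Rmat
    rw [ptransp_sub, ptransp_one, ptransp_smul, ptransp_permOp, siteOp_zero, siteOp_zero]
    rw [mul_sub, mul_one, mul_smul_comm, kron_mul_Wm, Matrix.transpose_one, Matrix.mul_one,
      Matrix.mul_one]
    rw [sub_mul, smul_mul_assoc, kron_mul, Wm_mul_kron, Matrix.one_mul, Matrix.mul_one,
      Matrix.mul_one]
    rw [hVinv, hVT, smul_mul_assoc, hVV, smul_smul, hθ2, one_smul, kron_one_one]
    rw [Wm_smul_left, Wm_smul_right, smul_smul θ θ, hθ2, one_smul]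
  rw [hG, siteOp_zero, siteOp_one]
  unfold Rmat
  exact core (hbar / (lama - lamb)) (hbar / (-lama - lamb - hbar * ρ)) θ ε hθ2 hε2 V K hVT
    hKV hVK
end
end

section
/- The matrix S_a(λ) = T_a(λ) K_a T_a^{t_a}(−λ−ħρ) satisfies the symmetry relation: for all λ avoiding the poles of both sides and with 2λ + ħρ ≠ 0, S_a^{t_a}(λ) = ε S_a(−λ−ħρ) − (θħ/(2λ+ħρ)) (S_a(−λ−ħρ) − S_a(λ)), as operators on ℂ^N ⊗ (ℂ^N)^{⊗ℓ}. -/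
/-!
Write operators on `ℂ^N ⊗ (ℂ^N)^{⊗ℓ}` as `N × N` block matrices whose blocks are operators on
the quantum spaces. Then `t_a` becomes `X ↦ V⁻¹ Xᵀ V`, where `ᵀ` moves the blocks but does not
transpose them, and `P_{an} = E⁽ⁿ⁾ᵀ` for the matrix units `E⁽ⁿ⁾` of site `n`. This transposition
reverses products of matrices whose blocks commute, and `Eᵀ X E = Xᵀ E` when the blocks of `X`
commute with those of `E`. With `Vᵀ = θ V` these give the four exchange rules of `P` and `P^{t_a}`
with the monodromy of the other sites. Peeling off one factor `L_{an}` at a time then proves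
`(T(λ) K T^{t}(μ))^{t} = (ε - c) T(μ) K T^{t}(λ) + c T(λ) K T^{t}(μ)`, `c = θħ/(λ - μ)`,
by induction on the sites, starting from `K^{t} = ε K`; take `μ = -λ - ħρ`.
-/

open Matrix Finset

noncomputable section

/-- The monodromy matrix `T_a(λ) = L_{a1}(λ) ⋯ L_{aℓ}(λ)` acting on the
auxiliary space (`Sum.inl ()`) tensored with `ℓ` quantum spaces, where
`L_{an}(λ) = I − ħ P_{an}/(λ + a_n)`. -/
def Tmono (N ℓ : ℕ) (hbar : ℂ) (a : Fin ℓ → ℂ) (lam : ℂ) :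
    Matrix ((Unit ⊕ Fin ℓ) → Fin N) ((Unit ⊕ Fin ℓ) → Fin N) ℂ :=
  ((List.finRange ℓ).map
    (fun n => Rmat N hbar (Sum.inl () : Unit ⊕ Fin ℓ) (Sum.inr n) (lam + a n))).prod

/-- The twisted monodromy matrix `S_a(λ) = T_a(λ) K_a T_a^{t_a}(−λ−ħρ)`,
with `K = diagonal ζ`. -/
def Smat (N ℓ : ℕ) (hbar ρ : ℂ) (a : Fin ℓ → ℂ) (V : Matrix (Fin N) (Fin N) ℂ)
    (ζ : Fin N → ℂ) (lam : ℂ) :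
    Matrix ((Unit ⊕ Fin ℓ) → Fin N) ((Unit ⊕ Fin ℓ) → Fin N) ℂ :=
  Tmono N ℓ hbar a lam * siteOp N (Sum.inl ()) (Matrix.diagonal ζ) *
    gtransp V (Sum.inl ()) (Tmono N ℓ hbar a (-lam - hbar * ρ))

/-- Partial trace over the auxiliary tensor factor. -/
def ptrAux (N ℓ : ℕ)
    (M : Matrix ((Unit ⊕ Fin ℓ) → Fin N) ((Unit ⊕ Fin ℓ) → Fin N) ℂ) :
    Matrix (Fin ℓ → Fin N) (Fin ℓ → Fin N) ℂ :=
  fun f g => ∑ i : Fin N, M (Sum.elim (fun _ => i) f) (Sum.elim (fun _ => i) g)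

/-- The transfer matrix `s(λ) = tr_a S_a(λ)`. -/
def transfer (N ℓ : ℕ) (hbar ρ : ℂ) (a : Fin ℓ → ℂ) (V : Matrix (Fin N) (Fin N) ℂ)
    (ζ : Fin N → ℂ) (lam : ℂ) : Matrix (Fin ℓ → Fin N) (Fin ℓ → Fin N) ℂ :=
  ptrAux N ℓ (Smat N ℓ hbar ρ a V ζ lam)

/-- The operator-valued `(i,j)` entry of a matrix on (auxiliary) ⊗ (ℂ^N)^{⊗ℓ}:
if `M = Σ E_{ij} ⊗ M_{ij}` then `entryOp N ℓ M i j = M_{ij}`. -/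
def entryOp (N ℓ : ℕ)
    (M : Matrix ((Unit ⊕ Fin ℓ) → Fin N) ((Unit ⊕ Fin ℓ) → Fin N) ℂ) (i j : Fin N) :
    Matrix (Fin ℓ → Fin N) (Fin ℓ → Fin N) ℂ :=
  fun f g => M (Sum.elim (fun _ => i) f) (Sum.elim (fun _ => j) g)

namespace SNP

section BlockTranspose

variable {𝕜 n R : Type*} [Field 𝕜] [Fintype n] [Ring R] [Algebra 𝕜 R]

omit [Algebra 𝕜 R] in
theorem transpose_mul_of_commute {A B : Matrix n n R}
    (h : ∀ i j k l, Commute (A i j) (B k l)) : (A * B)ᵀ = Bᵀ * Aᵀ := by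
  ext i j
  simp only [transpose_apply, mul_apply]
  exact Finset.sum_congr rfl fun k _ => (h j k k i).eq

omit [Fintype n] in
theorem commute_map_algebraMap (V : Matrix n n 𝕜) (X : Matrix n n R) (i j k l : n) :
    Commute (V.map (algebraMap 𝕜 R) i j) (X k l) :=
  Algebra.commutes _ _

omit [Fintype n] in
theorem map_smul_algebraMap (c : 𝕜) (A : Matrix n n 𝕜) :
    (c • A).map (algebraMap 𝕜 R) = c • A.map (algebraMap 𝕜 R) :=
  Matrix.map_smul _ c (fun a => (Algebra.linearMap 𝕜 R).map_smul c a) A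

variable [DecidableEq n]

theorem commute_of_mem_matrix_centralizer {t : Set R} {A B : Matrix n n R}
    (hA : ∀ i j, A i j ∈ t) (hB : B ∈ (Subalgebra.centralizer 𝕜 t).matrix) (i j k l : n) :
    Commute (A i j) (B k l) :=
  (Subalgebra.mem_centralizer_iff 𝕜).mp (hB k l) _ (hA i j)

theorem map_algebraMap_mem_matrix (S : Subalgebra 𝕜 R) (V : Matrix n n 𝕜) :
    V.map (algebraMap 𝕜 R) ∈ S.matrix :=
  fun i j => S.algebraMap_mem (V i j)

theorem map_algebraMap_inv_mul {V : Matrix n n 𝕜} (hV : IsUnit V.det) :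
    V⁻¹.map (algebraMap 𝕜 R) * V.map (algebraMap 𝕜 R) = 1 := by
  rw [← Matrix.map_mul, nonsing_inv_mul V hV, Matrix.map_one _ (map_zero _) (map_one _)]

theorem map_algebraMap_mul_inv {V : Matrix n n 𝕜} (hV : IsUnit V.det) :
    V.map (algebraMap 𝕜 R) * V⁻¹.map (algebraMap 𝕜 R) = 1 := by
  rw [← Matrix.map_mul, mul_nonsing_inv V hV, Matrix.map_one _ (map_zero _) (map_one _)]

variable (R) in
def gtranspBlock (V : Matrix n n 𝕜) : Matrix n n R →ₗ[𝕜] Matrix n n R where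
  toFun X := V⁻¹.map (algebraMap 𝕜 R) * Xᵀ * V.map (algebraMap 𝕜 R)
  map_add' X Y := by rw [transpose_add, Matrix.mul_add, Matrix.add_mul]
  map_smul' c X := by rw [transpose_smul, Matrix.mul_smul, Matrix.smul_mul]; rfl

variable {V : Matrix n n 𝕜}

theorem gtranspBlock_apply (X : Matrix n n R) :
    gtranspBlock R V X = V⁻¹.map (algebraMap 𝕜 R) * Xᵀ * V.map (algebraMap 𝕜 R) := rfl

theorem gtranspBlock_mem_matrix {S : Subalgebra 𝕜 R} {X : Matrix n n R} (hX : X ∈ S.matrix) :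
    gtranspBlock R V X ∈ S.matrix :=
  mul_mem (mul_mem (map_algebraMap_mem_matrix S _) fun i j => hX j i)
    (map_algebraMap_mem_matrix S _)

theorem gtranspBlock_map_algebraMap (K : Matrix n n 𝕜) :
    gtranspBlock R V (K.map (algebraMap 𝕜 R)) = (V⁻¹ * Kᵀ * V).map (algebraMap 𝕜 R) := by
  rw [gtranspBlock_apply, ← transpose_map, Matrix.map_mul, Matrix.map_mul]

variable (hV : IsUnit V.det)
include hV

theorem gtranspBlock_one : gtranspBlock R V 1 = 1 := by
  rw [gtranspBlock_apply, transpose_one, Matrix.mul_one, map_algebraMap_inv_mul hV]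

theorem gtranspBlock_mul {A B : Matrix n n R} (h : ∀ i j k l, Commute (A i j) (B k l)) :
    gtranspBlock R V (A * B) = gtranspBlock R V B * gtranspBlock R V A := by
  simp only [gtranspBlock_apply, transpose_mul_of_commute h, Matrix.mul_assoc]
  rw [← Matrix.mul_assoc (V.map _), map_algebraMap_mul_inv hV, Matrix.one_mul]

theorem gtranspBlock_gtranspBlock {θ : 𝕜} (hVt : Vᵀ = θ • V) (hθ : θ * θ = 1)
    (X : Matrix n n R) : gtranspBlock R V (gtranspBlock R V X) = X := by
  have hWt : (V⁻¹)ᵀ = θ • V⁻¹ := by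
    rw [transpose_nonsing_inv, hVt]
    refine inv_eq_left_inv ?_
    rw [smul_mul_smul_comm, hθ, nonsing_inv_mul V hV, one_smul]
  rw [gtranspBlock_apply, gtranspBlock_apply,
    transpose_mul_of_commute fun i j k l => (commute_map_algebraMap _ _ k l i j).symm,
    transpose_mul_of_commute (commute_map_algebraMap _ _), transpose_transpose,
    ← transpose_map, ← transpose_map, hVt, hWt, map_smul_algebraMap, map_smul_algebraMap]
  simp only [Matrix.mul_smul, Matrix.smul_mul, smul_smul, hθ, one_smul, ← Matrix.mul_assoc,
    map_algebraMap_inv_mul hV, Matrix.one_mul]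
  rw [Matrix.mul_assoc, map_algebraMap_inv_mul hV, Matrix.mul_one]

end BlockTranspose

section MatrixUnits

variable {𝕜 n R : Type*} [Field 𝕜] [Fintype n] [DecidableEq n] [Ring R] [Algebra 𝕜 R]

theorem one_sub_smul_mul_mul_one_sub_smul (x y : 𝕜) (A B C : Matrix n n R) :
    (1 - x • A) * B * (1 - y • C) = B - x • (A * B) - y • (B * C) + (x * y) • (A * B * C) := by
  simp only [sub_mul, mul_sub, Matrix.one_mul, Matrix.mul_one, smul_mul_assoc, mul_smul_comm]
  module

def IsMatrixUnits (E : Matrix n n R) : Prop :=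
  ∀ i j k l, E i j * E k l = if j = k then E i l else 0

variable (𝕜) in
abbrev entryCentralizer (E : Matrix n n R) : Subalgebra 𝕜 R :=
  Subalgebra.centralizer 𝕜 (Set.range (Function.uncurry E))

omit [Algebra 𝕜 R] in
theorem IsMatrixUnits.transpose_mul_mul {E X : Matrix n n R} (hE : IsMatrixUnits E)
    (hX : ∀ i j k l, Commute (E i j) (X k l)) : Eᵀ * X * E = Xᵀ * E := by
  ext i j
  simp only [mul_apply, transpose_apply, Finset.sum_mul]
  rw [Finset.sum_comm]
  refine Finset.sum_congr rfl fun k _ => ?_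
  have hterm (m : n) : E k i * X k m * E m j = X k m * if i = m then E k j else 0 := by
    rw [(hX k i k m).eq, mul_assoc, hE]
  simp only [hterm, mul_ite, mul_zero, Finset.sum_ite_eq, Finset.mem_univ, if_true]

variable {V : Matrix n n 𝕜} (hV : IsUnit V.det) {E M : Matrix n n R}
  (hM : M ∈ (entryCentralizer 𝕜 E).matrix)

local notation "τ" => gtranspBlock R V

include hV hM

theorem gtranspBlock_transpose_mul : τ (Eᵀ * M) = τ M * τ Eᵀ :=
  gtranspBlock_mul hV (commute_of_mem_matrix_centralizer (fun i j => Set.mem_range_self (j, i)) hM)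

variable {θ : 𝕜} (hVt : Vᵀ = θ • V)
include hVt

theorem gtranspBlock_transpose_mul_mul_gtranspBlock (hE : IsMatrixUnits E) :
    τ (Eᵀ * M * τ Eᵀ) = θ • (Eᵀ * M) := by
  set W := V⁻¹.map (algebraMap 𝕜 R)
  set V' := V.map (algebraMap 𝕜 R)
  have hMW : M * W ∈ (entryCentralizer 𝕜 E).matrix := mul_mem hM (map_algebraMap_mem_matrix _ _)
  have hsandwich : Eᵀ * M * τ Eᵀ = (M * W)ᵀ * E * V' := by
    rw [← hE.transpose_mul_mul fun i j k l =>
      commute_of_mem_matrix_centralizer (fun i j => Set.mem_range_self (i, j)) hMW i j k l,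
      gtranspBlock_apply, transpose_transpose]
    simp only [Matrix.mul_assoc]
    rfl
  have htranspose : ((M * W)ᵀ * E * V')ᵀ = V'ᵀ * (Eᵀ * (M * W)) := by
    rw [transpose_mul_of_commute (A := (M * W)ᵀ * E) (B := V')
        fun i j k l => (commute_map_algebraMap _ _ k l i j).symm,
      transpose_mul_of_commute (A := (M * W)ᵀ) (B := E) fun i j k l =>
        (commute_of_mem_matrix_centralizer (fun i j => Set.mem_range_self (i, j)) hMW
          k l j i).symm,
      transpose_transpose]
  rw [hsandwich, gtranspBlock_apply, htranspose, ← transpose_map, hVt, map_smul_algebraMap]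
  simp only [Matrix.mul_smul, Matrix.smul_mul, Matrix.mul_assoc]
  rw [map_algebraMap_inv_mul hV, Matrix.mul_one, ← Matrix.mul_assoc W,
    map_algebraMap_inv_mul hV, Matrix.one_mul]

variable (hθ : θ * θ = 1)
include hθ

theorem gtranspBlock_mul_gtranspBlock_transpose : τ (M * τ Eᵀ) = Eᵀ * τ M := by
  have hEt : Eᵀ ∈ (Subalgebra.centralizer 𝕜 (entryCentralizer 𝕜 E : Set R)).matrix :=
    fun i j => (Subalgebra.mem_centralizer_iff 𝕜).mpr fun _ hg =>
      ((Subalgebra.mem_centralizer_iff 𝕜).mp hg _ (Set.mem_range_self (j, i))).symm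
  rw [gtranspBlock_mul hV (commute_of_mem_matrix_centralizer hM (gtranspBlock_mem_matrix hEt)),
    gtranspBlock_gtranspBlock hV hVt hθ]

variable (hE : IsMatrixUnits E)
include hE

theorem transpose_mul_gtranspBlock_mul_gtranspBlock : Eᵀ * τ M * τ Eᵀ = θ • (M * τ Eᵀ) := by
  have hτM := gtranspBlock_mem_matrix (V := V) hM
  have h := congrArg τ (gtranspBlock_transpose_mul_mul_gtranspBlock hV hτM hVt hE)
  rwa [gtranspBlock_gtranspBlock hV hVt hθ, map_smul, gtranspBlock_transpose_mul hV hτM,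
    gtranspBlock_gtranspBlock hV hVt hθ] at h

theorem gtranspBlock_one_sub_mul_mul_one_sub {M' : Matrix n n R} {α β c ε : 𝕜}
    (hscal : c * (β - α) = θ * (α * β)) (hM' : τ M = (ε - c) • M' + c • M) :
    τ ((1 - α • Eᵀ) * M * (1 - β • τ Eᵀ)) =
      (ε - c) • ((1 - β • Eᵀ) * M' * (1 - α • τ Eᵀ)) +
        c • ((1 - α • Eᵀ) * M * (1 - β • τ Eᵀ)) := by
  have hcross : (ε - c) • (Eᵀ * M' * τ Eᵀ) + c • (Eᵀ * M * τ Eᵀ) = θ • (M * τ Eᵀ) := by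
    have h := transpose_mul_gtranspBlock_mul_gtranspBlock hV hM hVt hθ hE
    rwa [hM', Matrix.mul_add, Matrix.add_mul, mul_smul_comm, mul_smul_comm, smul_mul_assoc,
      smul_mul_assoc] at h
  rw [one_sub_smul_mul_mul_one_sub_smul, one_sub_smul_mul_mul_one_sub_smul, map_add, map_sub,
    map_sub, map_smul, map_smul, map_smul, gtranspBlock_transpose_mul_mul_gtranspBlock hV hM hVt hE,
    gtranspBlock_transpose_mul hV hM, gtranspBlock_mul_gtranspBlock_transpose hV hM hVt hθ, hM',
    Matrix.add_mul, smul_mul_assoc, smul_mul_assoc, Matrix.mul_add, mul_smul_comm, mul_smul_comm]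
  linear_combination (norm := module) hscal • (M * τ Eᵀ - Eᵀ * M) - (α * β) • hcross

end MatrixUnits

section Monodromy

variable {𝕜 n J R : Type*} [Field 𝕜] [Fintype n] [DecidableEq n] [Ring R] [Algebra 𝕜 R]

def blockMonodromy (E : J → Matrix n n R) (hbar : 𝕜) (a : J → 𝕜) (l : List J) (x : 𝕜) :
    Matrix n n R :=
  (l.map fun m => 1 - (hbar / (x + a m)) • (E m)ᵀ).prod

variable {E : J → Matrix n n R} (hbar : 𝕜) (a : J → 𝕜)

theorem blockMonodromy_cons (m : J) (l : List J) (x : 𝕜) :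
    blockMonodromy E hbar a (m :: l) x =
      (1 - (hbar / (x + a m)) • (E m)ᵀ) * blockMonodromy E hbar a l x := by
  rw [blockMonodromy, List.map_cons, List.prod_cons, blockMonodromy]

variable (hcomm : ∀ m m', m ≠ m' → ∀ i j k l, Commute (E m i j) (E m' k l))
include hcomm

theorem blockMonodromy_mem_entryCentralizer {l : List J} {m : J} (hm : m ∉ l) (x : 𝕜) :
    blockMonodromy E hbar a l x ∈ (entryCentralizer 𝕜 (E m)).matrix := by
  refine Subalgebra.list_prod_mem _ fun L hL => ?_
  obtain ⟨m', hm', rfl⟩ := List.mem_map.mp hL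
  have hne : m ≠ m' := fun h => hm (h ▸ hm')
  refine sub_mem (one_mem _) (Subalgebra.smul_mem _ (fun i j => ?_) _)
  refine (Subalgebra.mem_centralizer_iff 𝕜).mpr ?_
  rintro _ ⟨⟨k, l⟩, rfl⟩
  exact hcomm m m' hne k l j i

local notation "T" => blockMonodromy E hbar a

variable {V : Matrix n n 𝕜} (hV : IsUnit V.det) {θ : 𝕜} (hVt : Vᵀ = θ • V) (hθ : θ * θ = 1)
  (hE : ∀ m, IsMatrixUnits (E m)) {K : Matrix n n R} {ε : 𝕜} (hK : gtranspBlock R V K = ε • K)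
  (hKc : ∀ m, K ∈ (entryCentralizer 𝕜 (E m)).matrix)

local notation "τ" => gtranspBlock R V

include hV hVt hθ hE hK hKc in
theorem gtranspBlock_monodromy_mul_mul {x y : 𝕜} (hxy : x - y ≠ 0) (l : List J) (hl : l.Nodup)
    (hpoles : ∀ m ∈ l, x + a m ≠ 0 ∧ y + a m ≠ 0) :
    τ (T l x * K * τ (T l y)) =
      (ε - θ * hbar / (x - y)) • (T l y * K * τ (T l x)) +
        (θ * hbar / (x - y)) • (T l x * K * τ (T l y)) := by
  induction l with
  | nil =>
    simp only [blockMonodromy, List.map_nil, List.prod_nil, gtranspBlock_one hV, Matrix.one_mul,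
      Matrix.mul_one, hK]
    module
  | cons m t ih =>
    obtain ⟨hmt, htnodup⟩ := List.nodup_cons.mp hl
    obtain ⟨hxm, hym⟩ := hpoles m List.mem_cons_self
    have hmem (z : 𝕜) := blockMonodromy_mem_entryCentralizer hbar a hcomm hmt z
    have hτT (z : 𝕜) : τ (T (m :: t) z) = τ (T t z) * (1 - (hbar / (z + a m)) • τ (E m)ᵀ) := by
      rw [blockMonodromy_cons, sub_mul, Matrix.one_mul, smul_mul_assoc, map_sub, map_smul,
        gtranspBlock_transpose_mul hV (hmem z), Matrix.mul_sub, Matrix.mul_one, mul_smul_comm]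
    have hpeel (z w : 𝕜) : T (m :: t) z * K * τ (T (m :: t) w) =
        (1 - (hbar / (z + a m)) • (E m)ᵀ) * (T t z * K * τ (T t w)) *
          (1 - (hbar / (w + a m)) • τ (E m)ᵀ) := by
      rw [blockMonodromy_cons, hτT]
      simp only [Matrix.mul_assoc]
    have hscal : θ * hbar / (x - y) * (hbar / (y + a m) - hbar / (x + a m)) =
        θ * (hbar / (x + a m) * (hbar / (y + a m))) := by
      field_simp
      ring
    rw [hpeel, hpeel]
    exact gtranspBlock_one_sub_mul_mul_one_sub hV
      (mul_mem (mul_mem (hmem x) (hKc m)) (gtranspBlock_mem_matrix (hmem y))) hVt hθ (hE m)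
      hscal (ih htnodup fun m' hm' => hpoles m' (List.mem_cons_of_mem m hm'))

end Monodromy

section Sites

variable {N : ℕ} {I : Type} [DecidableEq I]

theorem update_eq_comm {f h : I → Fin N} {p : I} :
    Function.update h p (f p) = f ↔ Function.update f p (h p) = h := by
  simp only [Function.update_eq_iff, true_and]
  exact forall₂_congr fun _ _ => eq_comm

theorem update_eq_update_iff {p q : I} (hpq : p ≠ q) {f g : I → Fin N} :
    Function.update g q (f q) = Function.update f p (g p) ↔ ∀ r, r ≠ p → r ≠ q → g r = f r := by
  simp only [funext_iff, Function.update_apply]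
  refine forall_congr' fun r => ?_
  by_cases hp : r = p
  · subst hp; simp [hpq]
  · by_cases hq : r = q
    · subst hq; simp [hp]
    · simp [hp, hq]

variable [Fintype I]

theorem sum_ite_update_eq (g : I → Fin N) (p : I) (F : (I → Fin N) → ℂ) :
    ∑ h, (if Function.update g p (h p) = h then F h else 0) =
      ∑ k, F (Function.update g p k) := by
  rw [← Finset.sum_filter]
  refine Finset.sum_nbij' (· p) (Function.update g p) (by simp) (by simp) ?_ (by simp) ?_
  · intro h hh
    exact (Finset.mem_filter.mp hh).2
  · intro h hh
    rw [(Finset.mem_filter.mp hh).2]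

theorem siteOp_mul_apply (p : I) (A : Matrix (Fin N) (Fin N) ℂ)
    (M : Matrix (I → Fin N) (I → Fin N) ℂ) (f g : I → Fin N) :
    (siteOp N p A * M) f g = ∑ k, A (f p) k * M (Function.update f p k) g := by
  simp only [mul_apply, siteOp, update_eq_comm, ite_mul, zero_mul]
  rw [sum_ite_update_eq f p fun h => A (f p) (h p) * M h g]
  simp only [Function.update_self]

theorem siteOp_zero (p : I) : siteOp N p 0 = 0 := by
  ext f g
  simp [siteOp]

theorem siteOp_mul (p : I) (A B : Matrix (Fin N) (Fin N) ℂ) :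
    siteOp N p A * siteOp N p B = siteOp N p (A * B) := by
  ext f g
  have hcond (k : Fin N) :
      Function.update g p k = Function.update f p k ↔ Function.update g p (f p) = f := by
    simp only [Function.update_eq_iff, Function.update_apply, true_and, if_pos]
    exact forall₂_congr fun x hx => by rw [if_neg hx]
  simp only [siteOp_mul_apply, siteOp, Function.update_self, hcond, mul_ite, mul_zero]
  split_ifs <;> simp [mul_apply]

theorem siteOp_mul_siteOp_apply {p q : I} (hpq : p ≠ q) (A B : Matrix (Fin N) (Fin N) ℂ)
    (f g : I → Fin N) :
    (siteOp N p A * siteOp N q B) f g =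
      if ∀ r, r ≠ p → r ≠ q → g r = f r then A (f p) (g p) * B (f q) (g q) else 0 := by
  rw [siteOp_mul_apply, Finset.sum_eq_single (g p)]
  · simp only [siteOp, Function.update_of_ne hpq.symm, update_eq_update_iff hpq, mul_ite,
      mul_zero]
  · intro k _ hk
    rw [siteOp, if_neg, mul_zero]
    intro h
    have hp := congrFun h p
    simp only [Function.update_of_ne hpq, Function.update_self] at hp
    exact hk hp.symm
  · simp

theorem siteOp_commute {p q : I} (hpq : p ≠ q) (A B : Matrix (Fin N) (Fin N) ℂ) :
    Commute (siteOp N p A) (siteOp N q B) := by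
  ext f g
  rw [siteOp_mul_siteOp_apply hpq, siteOp_mul_siteOp_apply hpq.symm, mul_comm]
  exact if_congr ⟨fun h r hq hp => h r hp hq, fun h r hp hq => h r hq hp⟩ rfl rfl

end Sites

section AuxiliarySpace

variable {N : ℕ} {J : Type}

def auxSplit (N : ℕ) (J : Type) : (Unit ⊕ J → Fin N) ≃ Fin N × (J → Fin N) where
  toFun f := (f (Sum.inl ()), f ∘ Sum.inr)
  invFun p := Sum.elim (fun _ => p.1) p.2
  left_inv f := by funext r; rcases r with ⟨⟩ | j <;> rfl
  right_inv _ := rfl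

theorem sum_elim_eq_sum_elim_iff {i j : Fin N} {f g : J → Fin N} :
    Sum.elim (fun _ : Unit => i) f = Sum.elim (fun _ => j) g ↔ i = j ∧ f = g :=
  show (auxSplit N J).symm (i, f) = (auxSplit N J).symm (j, g) ↔ _ from
    (auxSplit N J).symm.injective.eq_iff.trans Prod.ext_iff

variable [DecidableEq J]

theorem update_inl_sum_elim (i j : Fin N) (f : J → Fin N) :
    Function.update (Sum.elim (fun _ => i) f) (Sum.inl ()) j = Sum.elim (fun _ => j) f := by
  funext r
  rcases r with ⟨⟩ | r <;> simp

theorem sum_elim_comp_swap (j : Fin N) (g : J → Fin N) (m : J) :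
    Sum.elim (fun _ => j) g ∘ Equiv.swap (Sum.inl ()) (Sum.inr m) =
      Sum.elim (fun _ => g m) (Function.update g m j) := by
  funext r
  rcases r with ⟨⟩ | r
  · simp
  · by_cases hr : r = m
    · subst hr; simp
    · simp [Equiv.swap_apply_of_ne_of_ne, hr]

variable [Fintype J]

def auxBlocks (N : ℕ) (J : Type) [Fintype J] [DecidableEq J] :
    Matrix (Unit ⊕ J → Fin N) (Unit ⊕ J → Fin N) ℂ ≃ₐ[ℂ]
      Matrix (Fin N) (Fin N) (Matrix (J → Fin N) (J → Fin N) ℂ) :=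
  (reindexAlgEquiv ℂ ℂ (auxSplit N J)).trans (compAlgEquiv (Fin N) (J → Fin N) ℂ ℂ).symm

theorem auxBlocks_apply (M : Matrix (Unit ⊕ J → Fin N) (Unit ⊕ J → Fin N) ℂ) (i j : Fin N)
    (f g : J → Fin N) :
    auxBlocks N J M i j f g = M (Sum.elim (fun _ => i) f) (Sum.elim (fun _ => j) g) := rfl

theorem auxBlocks_siteOp (A : Matrix (Fin N) (Fin N) ℂ) :
    auxBlocks N J (siteOp N (Sum.inl ()) A) = A.map (algebraMap ℂ _) := by
  ext i j f g
  simp only [auxBlocks_apply, siteOp, Sum.elim_inl, update_inl_sum_elim, Matrix.map_apply,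
    algebraMap_matrix_apply, Algebra.algebraMap_self, RingHom.id_apply,
    sum_elim_eq_sum_elim_iff, true_and, @eq_comm _ g f]

theorem auxBlocks_ptransp (M : Matrix (Unit ⊕ J → Fin N) (Unit ⊕ J → Fin N) ℂ) :
    auxBlocks N J (ptransp (Sum.inl ()) M) = (auxBlocks N J M)ᵀ := by
  ext i j f g
  simp only [auxBlocks_apply, ptransp, Sum.elim_inl, update_inl_sum_elim, transpose_apply]

theorem auxBlocks_gtransp (V : Matrix (Fin N) (Fin N) ℂ)
    (M : Matrix (Unit ⊕ J → Fin N) (Unit ⊕ J → Fin N) ℂ) :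
    auxBlocks N J (gtransp V (Sum.inl ()) M) = gtranspBlock _ V (auxBlocks N J M) := by
  rw [gtransp, map_mul, map_mul, auxBlocks_siteOp, auxBlocks_siteOp, auxBlocks_ptransp,
    gtranspBlock_apply]

def siteUnits (N : ℕ) (m : J) : Matrix (Fin N) (Fin N) (Matrix (J → Fin N) (J → Fin N) ℂ) :=
  fun k l => siteOp N m (single k l 1)

theorem isMatrixUnits_siteUnits (m : J) : IsMatrixUnits (siteUnits N m) := by
  intro i j k l
  rw [siteUnits, siteUnits, siteOp_mul]
  split_ifs with h
  · rw [h, single_mul_single_same, one_mul]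
    rfl
  · rw [single_mul_single_of_ne 1 i j k h, siteOp_zero]

theorem siteUnits_commute {m m' : J} (h : m ≠ m') (i j k l : Fin N) :
    Commute (siteUnits N m i j) (siteUnits N m' k l) :=
  siteOp_commute h _ _

theorem auxBlocks_permOp (m : J) :
    auxBlocks N J (permOp N (Sum.inl ()) (Sum.inr m)) = (siteUnits N m)ᵀ := by
  ext i j f g
  simp only [auxBlocks_apply, permOp, transpose_apply, siteUnits, siteOp, single_apply,
    sum_elim_comp_swap, sum_elim_eq_sum_elim_iff, Function.eq_update_iff,
    Function.update_eq_iff, true_and, ← ite_and]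
  exact if_congr ⟨fun ⟨h1, h2, h3⟩ => ⟨fun x hx => (h3 x hx).symm, h2.symm, h1⟩,
    fun ⟨h3, h2, h1⟩ => ⟨h1, h2.symm, fun x hx => (h3 x hx).symm⟩⟩ rfl rfl

theorem auxBlocks_Tmono (ℓ : ℕ) (hbar : ℂ) (a : Fin ℓ → ℂ) (x : ℂ) :
    auxBlocks N (Fin ℓ) (Tmono N ℓ hbar a x) =
      blockMonodromy (siteUnits N) hbar a (List.finRange ℓ) x := by
  rw [Tmono, map_list_prod, List.map_map, blockMonodromy]
  congr 1
  refine List.map_congr_left fun m _ => ?_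
  rw [Function.comp_apply, Rmat, map_sub, map_one, map_smul, auxBlocks_permOp]

theorem auxBlocks_Smat (ℓ : ℕ) (hbar ρ : ℂ) (a : Fin ℓ → ℂ) (V : Matrix (Fin N) (Fin N) ℂ)
    (ζ : Fin N → ℂ) (x : ℂ) :
    auxBlocks N (Fin ℓ) (Smat N ℓ hbar ρ a V ζ x) =
      blockMonodromy (siteUnits N) hbar a (List.finRange ℓ) x *
        (diagonal ζ).map (algebraMap ℂ _) *
        gtranspBlock _ V
          (blockMonodromy (siteUnits N) hbar a (List.finRange ℓ) (-x - hbar * ρ)) := by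
  rw [Smat, map_mul, map_mul, auxBlocks_siteOp, auxBlocks_gtransp, auxBlocks_Tmono, auxBlocks_Tmono]

end AuxiliarySpace

section Antidiagonal

variable {N : ℕ}

def antidiagonal (v : Fin N → ℂ) : Matrix (Fin N) (Fin N) ℂ :=
  of fun i j => if j = i.rev then v i else 0

theorem add_add_one_eq_iff_eq_rev {i j : Fin N} : (i : ℕ) + j + 1 = N ↔ j = i.rev := by
  rw [Fin.ext_iff, Fin.val_rev]
  omega

theorem Vplus_eq_antidiagonal : Vplus N = antidiagonal 1 := by
  ext i j
  exact if_congr add_add_one_eq_iff_eq_rev rfl rfl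

theorem Vminus_eq_antidiagonal :
    Vminus N = antidiagonal fun k => if 2 * (k : ℕ) < N then 1 else -1 := by
  ext i j
  exact if_congr add_add_one_eq_iff_eq_rev rfl rfl

variable {v : Fin N → ℂ} {θ : ℂ}

theorem antidiagonal_transpose (hrev : ∀ i, v i.rev = θ * v i) :
    (antidiagonal v)ᵀ = θ • antidiagonal v := by
  ext i j
  simp only [transpose_apply, antidiagonal, of_apply, Matrix.smul_apply, smul_eq_mul, mul_ite,
    mul_zero]
  by_cases h : j = i.rev
  · rw [if_pos (by rw [h, Fin.rev_rev]), if_pos h, h, hrev]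
  · rw [if_neg fun h' => h (by rw [h', Fin.rev_rev]), if_neg h]

theorem antidiagonal_mul_antidiagonal (w : Fin N → ℂ) :
    antidiagonal v * antidiagonal w = diagonal fun i => v i * w i.rev := by
  ext i j
  simp only [mul_apply, antidiagonal, of_apply, ite_mul, zero_mul, Finset.sum_ite_eq',
    Finset.mem_univ, if_true, diagonal_apply, Fin.rev_rev]
  simp only [mul_ite, mul_zero, @eq_comm _ j i]

theorem diagonal_mul_antidiagonal (ζ : Fin N → ℂ) :
    diagonal ζ * antidiagonal v = antidiagonal v * diagonal (ζ ∘ Fin.rev) := by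
  ext i j
  simp only [diagonal_mul, mul_diagonal, antidiagonal, of_apply, Function.comp_apply]
  split_ifs with h
  · rw [h, Fin.rev_rev, mul_comm]
  · simp

theorem isUnit_det_antidiagonal (hrev : ∀ i, v i.rev = θ * v i) (hsq : ∀ i, v i * v i = 1)
    (hθ : θ * θ = 1) : IsUnit (antidiagonal v).det := by
  have hdiag : (fun i => v i * v i.rev) = fun _ => θ :=
    funext fun i => by rw [hrev]; linear_combination θ * hsq i
  refine isUnit_det_of_right_inverse (B := θ • antidiagonal v) ?_
  rw [Matrix.mul_smul, antidiagonal_mul_antidiagonal, hdiag, ← smul_one_eq_diagonal, smul_smul,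
    hθ, one_smul]

theorem inv_antidiagonal_mul_diagonal_mul {ε : ℂ} {ζ : Fin N → ℂ}
    (hdet : IsUnit (antidiagonal v).det) (hζ : ∀ k, ζ k.rev = ε * ζ k) :
    (antidiagonal v)⁻¹ * (diagonal ζ)ᵀ * antidiagonal v = ε • diagonal ζ := by
  rw [diagonal_transpose, Matrix.mul_assoc, diagonal_mul_antidiagonal, ← Matrix.mul_assoc,
    nonsing_inv_mul _ hdet, Matrix.one_mul, ← diagonal_smul]
  exact congrArg diagonal (funext hζ)

theorem exists_antidiagonal_of_twist {V : Matrix (Fin N) (Fin N) ℂ}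
    (hV : (V = Vplus N ∧ θ = 1) ∨ (Even N ∧ V = Vminus N ∧ θ = -1)) :
    ∃ v : Fin N → ℂ, V = antidiagonal v ∧ (∀ i, v i.rev = θ * v i) ∧ (∀ i, v i * v i = 1) ∧
      θ * θ = 1 := by
  rcases hV with ⟨rfl, rfl⟩ | ⟨⟨r, hr⟩, rfl, rfl⟩
  · exact ⟨1, Vplus_eq_antidiagonal, fun _ => by simp, fun _ => by simp, by norm_num⟩
  · refine ⟨_, Vminus_eq_antidiagonal, fun i => ?_, fun i => ?_, by norm_num⟩
    · have := i.isLt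
      rw [Fin.val_rev]
      split_ifs <;> norm_num <;> omega
    · split_ifs <;> norm_num

end Antidiagonal

end SNP

open SNP

theorem snp_symmetry_relation_general (N ℓ : ℕ)
    (hbar : ℂ) (ρ θ ε : ℂ)
    (V : Matrix (Fin N) (Fin N) ℂ)
    (hV : (V = Vplus N ∧ θ = 1) ∨ (Even N ∧ V = Vminus N ∧ θ = -1))
    (ζ : Fin N → ℂ) (hζ : ∀ k : Fin N, ζ k.rev = ε * ζ k)
    (a : Fin ℓ → ℂ) (lam : ℂ) (hcr : 2 * lam + hbar * ρ ≠ 0)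
    (hpol : ∀ n : Fin ℓ, lam + a n ≠ 0 ∧ -lam - hbar * ρ + a n ≠ 0) :
    gtransp V (Sum.inl () : Unit ⊕ Fin ℓ) (Smat N ℓ hbar ρ a V ζ lam) =
      ε • Smat N ℓ hbar ρ a V ζ (-lam - hbar * ρ) -
        (θ * hbar / (2 * lam + hbar * ρ)) •
          (Smat N ℓ hbar ρ a V ζ (-lam - hbar * ρ) - Smat N ℓ hbar ρ a V ζ lam) := by
  obtain ⟨v, rfl, hrev, hsq, hθ⟩ := exists_antidiagonal_of_twist hV
  have hdet := isUnit_det_antidiagonal hrev hsq hθ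
  have hK : gtranspBlock _ (antidiagonal v) ((diagonal ζ).map (algebraMap ℂ _)) =
      ε • (diagonal ζ).map (algebraMap ℂ (Matrix (Fin ℓ → Fin N) (Fin ℓ → Fin N) ℂ)) := by
    rw [gtranspBlock_map_algebraMap, inv_antidiagonal_mul_diagonal_mul hdet hζ,
      map_smul_algebraMap]
  have hsep : lam - (-lam - hbar * ρ) = 2 * lam + hbar * ρ := by ring
  have hblocks := gtranspBlock_monodromy_mul_mul hbar a (fun _ _ => siteUnits_commute) hdet
    (antidiagonal_transpose hrev) hθ isMatrixUnits_siteUnits hK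
    (fun _ => map_algebraMap_mem_matrix _ _) (hsep ▸ hcr) (List.finRange ℓ)
    (List.nodup_finRange ℓ) fun m _ => hpol m
  apply (auxBlocks N (Fin ℓ)).injective
  simp only [map_sub, map_smul]
  rw [auxBlocks_gtransp, auxBlocks_Smat, auxBlocks_Smat,
    show -(-lam - hbar * ρ) - hbar * ρ = lam by ring, hblocks, hsep]
  module

/-- the symmetry relation
`S^{t_a}(λ) = ε S(−λ−ħρ) − (θħ/(2λ+ħρ)) (S(−λ−ħρ) − S(λ))`. -/
theorem snp_symmetry_relation (N ℓ : ℕ) (hN : 2 ≤ N) (hℓ : 1 ≤ ℓ)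
    (hbar : ℂ) (hhbar : hbar ≠ 0) (ρ θ ε : ℂ)
    (V : Matrix (Fin N) (Fin N) ℂ)
    (hV : (V = Vplus N ∧ θ = 1) ∨ (Even N ∧ V = Vminus N ∧ θ = -1))
    (hε : ε = 1 ∨ ε = -1)
    (ζ : Fin N → ℂ) (hζ0 : ∀ k, ζ k ≠ 0) (hζ : ∀ k : Fin N, ζ k.rev = ε * ζ k)
    (a : Fin ℓ → ℂ) (lam : ℂ) (hcr : 2 * lam + hbar * ρ ≠ 0)
    (hpol : ∀ n : Fin ℓ, lam + a n ≠ 0 ∧ -lam - hbar * ρ + a n ≠ 0) :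
    gtransp V (Sum.inl () : Unit ⊕ Fin ℓ) (Smat N ℓ hbar ρ a V ζ lam) =
      ε • Smat N ℓ hbar ρ a V ζ (-lam - hbar * ρ) -
        (θ * hbar / (2 * lam + hbar * ρ)) •
          (Smat N ℓ hbar ρ a V ζ (-lam - hbar * ρ) - Smat N ℓ hbar ρ a V ζ lam) :=
  snp_symmetry_relation_general N ℓ hbar ρ θ ε V hV ζ hζ a lam hcr hpol
end
end

section
/- Highest-weight property of the twisted monodromy matrix (fundamental sites): let Ŝ_a(λ) = ∏_{n=1}^ℓ (λ+a_n)(−λ−ħρ+a_n) · S_a(λ) = Σ_{j,k} E_{jk} ⊗ Ŝ_{jk}(λ), and v⁺ = e₁ ⊗ ⋯ ⊗ e₁ ∈ (ℂ^N)^{⊗ℓ}. Define P_k(λ) = ∏_{n=1}^ℓ (λ + a_n − ħ δ_{k,1}) and σ_k(λ) = P_k(λ) P_{N+1−k}(−λ−ħρ). Then for all λ with 2λ + ħρ ≠ 0: (i) Ŝ_{jk}(λ) v⁺ = 0 for 1 ≤ k < j ≤ N; (ii) Ŝ_{kk}(λ) v⁺ = ζ_k σ_k(λ) v⁺ for 1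 ≤ k ≤ (N+1)/2; (iii) Ŝ_{kk}(λ) v⁺ = (ζ_k/(2λ+ħρ)) [ (2λ + ħ(ρ − θε)) σ_k(λ) + θεħ σ_{N+1−k}(λ) ] v⁺ for N/2 + 1 ≤ k ≤ N. -/
open Matrix Finset

noncomputable section

/-- The pseudo-vacuum (highest weight) vector `v⁺ = e₁ ⊗ ⋯ ⊗ e₁` of `(ℂ^N)^{⊗ℓ}`. -/
def vplus (N ℓ : ℕ) : (Fin ℓ → Fin N) → ℂ :=
  fun f => if ∀ m, (f m : ℕ) = 0 then 1 else 0

/-- The renormalized twisted monodromy matrix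
`Ŝ(λ) = ∏ₙ (λ+aₙ)(−λ−ħρ+aₙ) · S(λ)`. -/
def Shat (N ℓ : ℕ) (hbar ρ : ℂ) (a : Fin ℓ → ℂ) (V : Matrix (Fin N) (Fin N) ℂ)
    (ζ : Fin N → ℂ) (lam : ℂ) :
    Matrix ((Unit ⊕ Fin ℓ) → Fin N) ((Unit ⊕ Fin ℓ) → Fin N) ℂ :=
  (∏ n : Fin ℓ, (lam + a n) * (-lam - hbar * ρ + a n)) • Smat N ℓ hbar ρ a V ζ lam

/-- The Drinfeld polynomial for the fundamental weights `α = (1, 0, …, 0)`: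
`P_k(λ) = ∏ₙ (λ + aₙ − ħ δ_{k,1})`. -/
def Pfun (N ℓ : ℕ) (hbar : ℂ) (a : Fin ℓ → ℂ) (k : Fin N) (lam : ℂ) : ℂ :=
  ∏ n : Fin ℓ, (lam + a n - hbar * (if (k : ℕ) = 0 then 1 else 0))

/-- `σ_k(λ) = P_k(λ) P_{k̄}(−λ−ħρ)` with `k̄ = N+1−k`. -/
def sigmafun (N ℓ : ℕ) (hbar ρ : ℂ) (a : Fin ℓ → ℂ) (k : Fin N) (lam : ℂ) : ℂ :=
  Pfun N ℓ hbar a k lam * Pfun N ℓ hbar a k.rev (-lam - hbar * ρ)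

/-!
Clearing the poles, `Ŝ(λ) = L̂(λ) K V⁻¹ L̂(μ)^{t_a} V` with `μ = −λ−ħρ`, where `L̂(z)` is the
ordered product of the operators `z + aₙ − ħ P_{an}`. Each of these only permutes the entries
of a basis configuration, so weights are conserved, and on the vectors `e_k ⊗ v⁺` the product
is explicit: `e₁ ⊗ v⁺` is an eigenvector with eigenvalue `∏ (z + aₙ − ħ)`, while for `k ≠ 1`
the vector `e_k ⊗ v⁺` goes to `∏ (z + aₙ) e_k ⊗ v⁺` plus multiples of the vectors `e₁ ⊗ v⁺`
with `e_k` put at one site `n`, the coefficient being a product of `z + aₘ − ħ` over the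
sites before `n` and of `z + aₘ` over those after it.

As `V` is antidiagonal, it sends `e_k` to a multiple of `e_{k̄}`. If `k̄ ≠ 1`, the partial
transpose acts on `e_{k̄} ⊗ v⁺` by the scalar `∏ (μ + aₙ)`, so the column of `Ŝ` is a
multiple of `L̂(λ)(e_k ⊗ v⁺)`: this gives (i), (ii) and (iii) for `k < N`. For `k = N` the
transpose also produces the vectors `e_{ī} ⊗ (v⁺ with e_i at site n)`; by weight conservation
only `i = N` contributes to the `(N, N)` entry, through the coefficient of `e_N ⊗ v⁺` in
`L̂(λ)(e₁ ⊗ (v⁺ with e_N at site n))`. The resulting sum over `n` of products of partial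
products telescopes, because `(μ + aₙ − ħ)(λ + aₙ) − (μ + aₙ)(λ + aₙ − ħ) = −ħ(2λ + ħρ)`
does not depend on `n`.
-/

namespace TwistedMonodromy

section Lists

variable {α R : Type*} [DecidableEq α]

/-- The product of `p` over the entries of the list before the first occurrence of `n`, times
the product of `q` over the entries after it. -/
def splitProd [CommMonoid R] (p q : α → R) : List α → α → R
  | [], _ => 1
  | m :: xs, n => if n = m then (xs.map q).prod else p m * splitProd p q xs n

variable (p q : α → R) {xs : List α}

lemma splitProd_append_singleton_of_mem [CommMonoid R] {n : α} (x : α) (hn : n ∈ xs) :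
    splitProd p q (xs ++ [x]) n = splitProd p q xs n * q x := by
  induction xs with
  | nil => cases hn
  | cons m xs ih =>
    by_cases hnm : n = m
    · simp [splitProd, hnm]
    · simp only [List.cons_append, splitProd, if_neg hnm]
      rw [ih ((List.mem_cons.mp hn).resolve_left hnm), mul_assoc]

lemma splitProd_append_singleton_self [CommMonoid R] {x : α} (hx : x ∉ xs) :
    splitProd p q (xs ++ [x]) x = (xs.map p).prod := by
  induction xs with
  | nil => simp [splitProd]
  | cons m xs ih =>
    rw [List.mem_cons, not_or] at hx
    simp [splitProd, hx.1, ih hx.2]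

lemma splitProd_mul [CommMonoid R] (p' q' : α → R) (n : α) :
    splitProd p q xs n * splitProd p' q' xs n =
      splitProd (fun m => p m * p' m) (fun m => q m * q' m) xs n := by
  induction xs with
  | nil => simp [splitProd]
  | cons m xs ih =>
    by_cases hnm : n = m
    · simp [splitProd, hnm, List.prod_map_mul]
    · simp only [splitProd, if_neg hnm]
      rw [← ih, mul_mul_mul_comm]

lemma prod_map_sub_prod_map_eq_sum [CommRing R] (hxs : xs.Nodup) :
    (xs.map p).prod - (xs.map q).prod =
      (xs.map fun n => splitProd p q xs n * (p n - q n)).sum := by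
  induction xs using List.reverseRecOn with
  | nil => simp
  | append_singleton xs x ih =>
    obtain ⟨hx, hxs'⟩ : x ∉ xs ∧ xs.Nodup := by
      simpa [List.nodup_append_comm (l₁ := xs)] using hxs
    have hterms : (xs.map fun n => splitProd p q (xs ++ [x]) n * (p n - q n)) =
        xs.map fun n => q x * (splitProd p q xs n * (p n - q n)) :=
      List.map_congr_left fun n hn => by
        rw [splitProd_append_singleton_of_mem p q x hn]; ring
    simp only [List.map_append, List.sum_append, List.prod_append, List.map_singleton,
      List.sum_singleton, List.prod_singleton]
    rw [hterms, List.sum_map_mul_left, ← ih hxs', splitProd_append_singleton_self p q hx]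
    ring

end Lists

lemma list_prod_map_smul {ι R A : Type*} [CommSemiring R] [Semiring A] [Algebra R A]
    (r : ι → R) (M : ι → A) (l : List ι) :
    (l.map fun i => r i • M i).prod = (l.map r).prod • (l.map M).prod := by
  induction l with
  | nil => simp
  | cons x l ih => simp only [List.map_cons, List.prod_cons, ih, smul_mul_smul_comm]

lemma mulVec_list_sum {m n α : Type*} [Fintype n] [NonUnitalNonAssocSemiring α]
    (M : Matrix m n α) (l : List (n → α)) : M *ᵥ l.sum = (l.map (M *ᵥ ·)).sum := by
  induction l with
  | nil => simp
  | cons v l ih => simp [mulVec_add, ih]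

variable {N ℓ : ℕ}

def withAux (i : Fin N) (g : Fin ℓ → Fin N) : Unit ⊕ Fin ℓ → Fin N :=
  Sum.elim (fun _ => i) g

lemma withAux_inj {i j : Fin N} {g f : Fin ℓ → Fin N} :
    withAux i g = withAux j f ↔ i = j ∧ g = f := by
  refine ⟨fun h => ⟨congrFun h (Sum.inl ()), funext fun m => congrFun h (Sum.inr m)⟩, ?_⟩
  rintro ⟨rfl, rfl⟩
  rfl

lemma withAux_eta (h : Unit ⊕ Fin ℓ → Fin N) : withAux (h (Sum.inl ())) (h ∘ Sum.inr) = h := by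
  funext x
  rcases x with ⟨⟩ | m <;> rfl

lemma update_aux_eq_withAux (h : Unit ⊕ Fin ℓ → Fin N) (c : Fin N) :
    Function.update h (Sum.inl ()) c = withAux c (h ∘ Sum.inr) := by
  funext x
  rcases x with ⟨⟩ | m <;> simp [withAux]

lemma withAux_comp_swap (i : Fin N) (g : Fin ℓ → Fin N) (n : Fin ℓ) :
    withAux i g ∘ Equiv.swap (Sum.inl ()) (Sum.inr n) =
      withAux (g n) (Function.update g n i) := by
  funext x
  rcases x with ⟨⟩ | m
  · simp [withAux]
  · rcases eq_or_ne m n with rfl | hm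
    · simp [withAux]
    · simp [withAux, Equiv.swap_apply_of_ne_of_ne, hm]

/-- The basis vector `e_i ⊗ e_{g 1} ⊗ ⋯ ⊗ e_{g ℓ}`. -/
def basisVec (i : Fin N) (g : Fin ℓ → Fin N) : (Unit ⊕ Fin ℓ → Fin N) → ℂ :=
  Pi.single (withAux i g) 1

@[simp]
lemma basisVec_apply_withAux (i j : Fin N) (g f : Fin ℓ → Fin N) :
    basisVec i g (withAux j f) = if j = i ∧ f = g then 1 else 0 := by
  simp [basisVec, Pi.single_apply, withAux_inj]

lemma mulVec_basisVec (M : Matrix (Unit ⊕ Fin ℓ → Fin N) (Unit ⊕ Fin ℓ → Fin N) ℂ)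
    (i : Fin N) (g : Fin ℓ → Fin N) :
    M *ᵥ basisVec i g = fun h => M h (withAux i g) := by
  rw [basisVec, mulVec_single_one]
  rfl

section Operators

variable {I : Type} [Fintype I] [DecidableEq I]

lemma permOp_mulVec (p q : I) (v : (I → Fin N) → ℂ) :
    permOp N p q *ᵥ v = fun h => v (h ∘ Equiv.swap p q) := by
  funext h
  have key : ∀ g : I → Fin N, h = g ∘ Equiv.swap p q ↔ g = h ∘ Equiv.swap p q := fun g => by
    constructor <;> rintro rfl <;> funext x <;> simp
  simp [mulVec, dotProduct, permOp, key]

lemma permOp_mulVec_single (p q : I) (g : I → Fin N) :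
    permOp N p q *ᵥ Pi.single g 1 = Pi.single (g ∘ Equiv.swap p q) 1 := by
  rw [mulVec_single_one]
  funext f
  simp [permOp, Pi.single_apply]

lemma siteOp_mulVec_single (p : I) (A : Matrix (Fin N) (Fin N) ℂ) (g : I → Fin N) :
    siteOp N p A *ᵥ Pi.single g 1 = ∑ c, A c (g p) • Pi.single (Function.update g p c) 1 := by
  rw [mulVec_single_one]
  funext f
  simp only [col_apply, siteOp, Finset.sum_apply, Pi.smul_apply, Pi.single_apply, smul_eq_mul,
    mul_ite, mul_one, mul_zero]
  rw [Finset.sum_eq_single (f p)]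
  · simp only [eq_comm]
  · intro c _ hc
    rw [if_neg]
    rintro rfl
    simp at hc
  · simp

end Operators

lemma siteOp_mulVec_basisVec (A : Matrix (Fin N) (Fin N) ℂ) (i : Fin N) (g : Fin ℓ → Fin N) :
    siteOp N (Sum.inl ()) A *ᵥ basisVec i g = ∑ c, A c i • basisVec c g := by
  simp only [basisVec, siteOp_mulVec_single, update_aux_eq_withAux]
  rfl

lemma siteOp_mulVec_basisVec_of_antidiag {A : Matrix (Fin N) (Fin N) ℂ}
    (hA : ∀ c i : Fin N, c ≠ i.rev → A c i = 0) (i : Fin N) (g : Fin ℓ → Fin N) :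
    siteOp N (Sum.inl ()) A *ᵥ basisVec i g = A i.rev i • basisVec i.rev g := by
  rw [siteOp_mulVec_basisVec, Finset.sum_eq_single i.rev]
  · intro c _ hc
    rw [hA c i hc, zero_smul]
  · simp

lemma siteOp_diagonal_mulVec_basisVec (ζ : Fin N → ℂ) (i : Fin N) (g : Fin ℓ → Fin N) :
    siteOp N (Sum.inl ()) (diagonal ζ) *ᵥ basisVec i g = ζ i • basisVec i g := by
  rw [siteOp_mulVec_basisVec, Finset.sum_eq_single i]
  · rw [diagonal_apply_eq]
  · intro c _ hc
    rw [diagonal_apply_ne _ hc, zero_smul]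
  · simp

lemma ptransp_mulVec_basisVec (M : Matrix (Unit ⊕ Fin ℓ → Fin N) (Unit ⊕ Fin ℓ → Fin N) ℂ)
    (c : Fin N) (g : Fin ℓ → Fin N) :
    ptransp (Sum.inl ()) M *ᵥ basisVec c g =
      fun h => (M *ᵥ basisVec (h (Sum.inl ())) g) (withAux c (h ∘ Sum.inr)) := by
  funext h
  simp only [mulVec_basisVec, ptransp, update_aux_eq_withAux]
  rfl

variable (N) in
/-- `(λ + aₙ) L_{an}(λ)`, the Lax operator cleared of its pole. -/
def laxHat (hbar z : ℂ) (n : Fin ℓ) : Matrix (Unit ⊕ Fin ℓ → Fin N) (Unit ⊕ Fin ℓ → Fin N) ℂ :=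
  z • 1 - hbar • permOp N (Sum.inl ()) (Sum.inr n)

variable (N) in
def monoHat (hbar : ℂ) (c : Fin ℓ → ℂ) (xs : List (Fin ℓ)) :
    Matrix (Unit ⊕ Fin ℓ → Fin N) (Unit ⊕ Fin ℓ → Fin N) ℂ :=
  (xs.map fun n => laxHat N hbar (c n) n).prod

section Monodromy

variable (hbar : ℂ) (c : Fin ℓ → ℂ)

lemma laxHat_mulVec_basisVec (z : ℂ) (n : Fin ℓ) (i : Fin N) (g : Fin ℓ → Fin N) :
    laxHat N hbar z n *ᵥ basisVec i g =
      z • basisVec i g - hbar • basisVec (g n) (Function.update g n i) := by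
  rw [laxHat, sub_mulVec, smul_mulVec, smul_mulVec, one_mulVec, basisVec,
    permOp_mulVec_single, withAux_comp_swap]
  rfl

lemma laxHat_mulVec_basisVec_of_eq (z : ℂ) {n : Fin ℓ} {i : Fin N} {g : Fin ℓ → Fin N}
    (hg : g n = i) : laxHat N hbar z n *ᵥ basisVec i g = (z - hbar) • basisVec i g := by
  rw [laxHat_mulVec_basisVec, hg, ← hg, Function.update_eq_self, sub_smul]

lemma monoHat_append_singleton (xs : List (Fin ℓ)) (x : Fin ℓ) :
    monoHat N hbar c (xs ++ [x]) = monoHat N hbar c xs * laxHat N hbar (c x) x := by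
  simp [monoHat]

lemma monoHat_mulVec_basisVec_of_forall_eq (xs : List (Fin ℓ)) {i : Fin N}
    {g : Fin ℓ → Fin N} (hg : ∀ n ∈ xs, g n = i) :
    monoHat N hbar c xs *ᵥ basisVec i g = (xs.map fun n => c n - hbar).prod • basisVec i g := by
  induction xs using List.reverseRecOn with
  | nil => simp [monoHat]
  | append_singleton xs x ih =>
    rw [monoHat_append_singleton, ← mulVec_mulVec,
      laxHat_mulVec_basisVec_of_eq hbar _ (hg x (by simp)), mulVec_smul,
      ih fun n hn => hg n (by simp [hn]), smul_smul]
    simp [mul_comm]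

/-- Weight conservation: every `laxHat` only permutes the entries of a configuration. -/
lemma monoHat_mulVec_apply_eq_zero (xs : List (Fin ℓ)) {b : Fin N}
    {v : (Unit ⊕ Fin ℓ → Fin N) → ℂ} (hv : ∀ h, b ∈ Set.range h → v h = 0)
    {h : Unit ⊕ Fin ℓ → Fin N} (hh : b ∈ Set.range h) : (monoHat N hbar c xs *ᵥ v) h = 0 := by
  induction xs generalizing h with
  | nil => simpa [monoHat] using hv h hh
  | cons x xs ih =>
    obtain ⟨y, rfl⟩ := hh
    have hswap : h y ∈ Set.range (h ∘ Equiv.swap (Sum.inl ()) (Sum.inr x)) :=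
      ⟨Equiv.swap (Sum.inl ()) (Sum.inr x) y, by simp⟩
    simp only [monoHat, List.map_cons, List.prod_cons, ← mulVec_mulVec] at ih ⊢
    rw [laxHat, sub_mulVec, smul_mulVec, smul_mulVec, one_mulVec, permOp_mulVec]
    simp [ih ⟨y, rfl⟩, ih hswap]

end Monodromy

section Excitation

variable [NeZero N] (hbar : ℂ) (c : Fin ℓ → ℂ) {xs : List (Fin ℓ)}

lemma monoHat_mulVec_basisVec_zero (hxs : xs.Nodup) (j : Fin N) :
    monoHat N hbar c xs *ᵥ basisVec j 0 =
      (xs.map c).prod • basisVec j 0 -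
        hbar • (xs.map fun n =>
          splitProd (fun m => c m - hbar) c xs n • basisVec 0 (Pi.single n j)).sum := by
  induction xs using List.reverseRecOn with
  | nil => simp [monoHat]
  | append_singleton xs x ih =>
    obtain ⟨hx, hxs'⟩ : x ∉ xs ∧ xs.Nodup := by
      simpa [List.nodup_append_comm (l₁ := xs)] using hxs
    have hterms : (xs.map fun n => splitProd (fun m => c m - hbar) c (xs ++ [x]) n •
          basisVec (N := N) 0 (Pi.single n j)).sum =
        c x • (xs.map fun n => splitProd (fun m => c m - hbar) c xs n •
          basisVec (N := N) 0 (Pi.single n j)).sum := by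
      rw [List.smul_sum, List.map_map]
      refine congrArg List.sum (List.map_congr_left fun n hn => ?_)
      rw [Function.comp_apply, splitProd_append_singleton_of_mem _ _ x hn, mul_comm, mul_smul]
    have hvac : monoHat N hbar c xs *ᵥ basisVec 0 (Pi.single x j) =
        (xs.map fun n => c n - hbar).prod • basisVec 0 (Pi.single x j) :=
      monoHat_mulVec_basisVec_of_forall_eq hbar c xs fun n hn =>
        Pi.single_eq_of_ne (ne_of_mem_of_not_mem hn hx) _
    rw [monoHat_append_singleton, ← mulVec_mulVec, laxHat_mulVec_basisVec, mulVec_sub,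
      mulVec_smul, mulVec_smul, ih hxs', Pi.zero_apply, ← Pi.single, hvac]
    simp only [List.map_append, List.sum_append, List.prod_append, List.map_singleton,
      List.sum_singleton, List.prod_singleton]
    rw [hterms, splitProd_append_singleton_self _ _ hx]
    module

lemma monoHat_mulVec_basisVec_zero_apply (hxs : xs.Nodup) {j k : Fin N} (hjk : k = 0 ∨ j ≠ 0)
    (f : Fin ℓ → Fin N) :
    (monoHat N hbar c xs *ᵥ basisVec k 0) (withAux j f) =
      if j = k ∧ f = 0 then (xs.map fun n => c n - hbar * if k = 0 then 1 else 0).prod else 0 := by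
  by_cases hk : k = 0
  · subst hk
    rw [monoHat_mulVec_basisVec_of_forall_eq hbar c xs (g := 0) fun _ _ => rfl]
    simp
  · rw [monoHat_mulVec_basisVec_zero hbar c hxs, Pi.sub_apply, Pi.smul_apply, Pi.smul_apply,
      Pi.list_sum_apply, List.map_map]
    simp [Function.comp_def, hk, hjk.resolve_left hk]

lemma monoHat_mulVec_basisVec_single_apply (hxs : xs.Nodup) {n : Fin ℓ} (hn : n ∈ xs)
    {j : Fin N} (hj : j ≠ 0) (f : Fin ℓ → Fin N) :
    (monoHat N hbar c xs *ᵥ basisVec 0 (Pi.single n j)) (withAux j f) =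
      -(hbar * splitProd c (fun m => c m - hbar) xs n) * if f = 0 then 1 else 0 := by
  induction xs using List.reverseRecOn with
  | nil => cases hn
  | append_singleton xs x ih =>
    obtain ⟨hx, hxs'⟩ : x ∉ xs ∧ xs.Nodup := by
      simpa [List.nodup_append_comm (l₁ := xs)] using hxs
    rw [monoHat_append_singleton, ← mulVec_mulVec]
    by_cases hnxs : n ∈ xs
    · have hnx : x ≠ n := (ne_of_mem_of_not_mem hnxs hx).symm
      rw [laxHat_mulVec_basisVec_of_eq hbar _ (Pi.single_eq_of_ne hnx _), mulVec_smul,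
        Pi.smul_apply, ih hxs' hnxs, splitProd_append_singleton_of_mem _ _ x hnxs, smul_eq_mul]
      ring
    · obtain rfl : n = x := by simpa [hnxs] using hn
      have hback : Function.update (Pi.single n j : Fin ℓ → Fin N) n 0 = 0 := by
        ext m
        rcases eq_or_ne m n with rfl | hm <;> simp [*]
      rw [laxHat_mulVec_basisVec, Pi.single_eq_same, hback, mulVec_sub, mulVec_smul,
        mulVec_smul, monoHat_mulVec_basisVec_of_forall_eq hbar c xs fun m hm =>
          Pi.single_eq_of_ne (ne_of_mem_of_not_mem hm hx) _,
        splitProd_append_singleton_self _ _ hx, Pi.sub_apply, Pi.smul_apply, Pi.smul_apply,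
        Pi.smul_apply, monoHat_mulVec_basisVec_zero_apply hbar c hxs' (Or.inr hj)]
      simp only [basisVec_apply_withAux, hj, false_and, if_false, true_and, mul_zero, sub_zero]
      split_ifs <;> ring

lemma monoHat_mulVec_basisVec_rev_single_apply (hxs : xs.Nodup) {k : Fin N} (hk : k.rev = 0)
    (hk0 : k ≠ 0) {i : Fin N} (hi : i ≠ 0) {n : Fin ℓ} (hn : n ∈ xs) (f : Fin ℓ → Fin N) :
    (monoHat N hbar c xs *ᵥ basisVec i.rev (Pi.single n i)) (withAux k f) =
      if i = k then -(hbar * splitProd c (fun m => c m - hbar) xs n) * (if f = 0 then 1 else 0)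
      else 0 := by
  by_cases hik : i = k
  · subst hik
    rw [if_pos rfl, hk]
    exact monoHat_mulVec_basisVec_single_apply hbar c hxs hn hk0 f
  · rw [if_neg hik]
    refine monoHat_mulVec_apply_eq_zero hbar c xs (b := k) (h := withAux k f)
      (fun h hh => Pi.single_eq_of_ne ?_ _) ⟨Sum.inl (), rfl⟩
    rintro rfl
    obtain ⟨x, hx⟩ := hh
    rcases x with ⟨⟩ | m
    · exact hi (by rw [← Fin.rev_rev i, ← hk]; exact congrArg Fin.rev hx)
    · rcases eq_or_ne m n with rfl | hm
      · exact hik (by simpa [withAux] using hx)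
      · exact hk0 (by simpa [withAux, hm] using hx.symm)

end Excitation

section Transposed

variable [NeZero N] (hbar : ℂ) (c : Fin ℓ → ℂ) {xs : List (Fin ℓ)}

lemma ptransp_monoHat_mulVec_basisVec_zero_of_ne_zero (hxs : xs.Nodup) {k : Fin N}
    (hk : k ≠ 0) :
    ptransp (Sum.inl ()) (monoHat N hbar c xs) *ᵥ basisVec k 0 =
      (xs.map c).prod • basisVec k 0 := by
  rw [ptransp_mulVec_basisVec]
  funext h
  conv_rhs => rw [← withAux_eta h]
  rw [monoHat_mulVec_basisVec_zero_apply hbar c hxs (Or.inr hk), Pi.smul_apply,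
    basisVec_apply_withAux]
  rcases eq_or_ne (h (Sum.inl ())) k with hi | hi
  · simp [hi, hk]
  · simp [hi, Ne.symm hi]

lemma ptransp_monoHat_mulVec_basisVec_zero_zero (hxs : xs.Nodup) :
    ptransp (Sum.inl ()) (monoHat N hbar c xs) *ᵥ basisVec 0 0 =
      (xs.map fun n => c n - hbar).prod • basisVec 0 0 -
        hbar • ∑ i ∈ Finset.univ.erase 0, (xs.map fun n =>
          splitProd (fun m => c m - hbar) c xs n • basisVec i (Pi.single n i)).sum := by
  rw [ptransp_mulVec_basisVec]
  funext h
  conv_rhs => rw [← withAux_eta h]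
  generalize h (Sum.inl ()) = i
  generalize h ∘ Sum.inr = f
  simp only [Pi.sub_apply, Pi.smul_apply, Finset.sum_apply, Pi.list_sum_apply, List.map_map,
    Function.comp_def, basisVec_apply_withAux, smul_eq_mul]
  by_cases hi : i = 0
  · subst hi
    rw [monoHat_mulVec_basisVec_of_forall_eq hbar c xs (g := 0) fun _ _ => rfl,
      Finset.sum_eq_zero fun i' hi' => ?_]
    · simp
    · simp [Ne.symm (Finset.ne_of_mem_erase hi')]
  · rw [monoHat_mulVec_basisVec_zero hbar c hxs, Finset.sum_eq_single_of_mem i (by simp [hi])]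
    · simp [Pi.list_sum_apply, Function.comp_def, hi, Ne.symm hi]
    · intro i' _ hi'
      simp [Ne.symm hi']

end Transposed

lemma mul_self_apply_of_antidiag {A : Matrix (Fin N) (Fin N) ℂ}
    (hA : ∀ i j : Fin N, i ≠ j.rev → A i j = 0) (i k : Fin N) :
    (A * A) i k = if i = k then A i i.rev * A i.rev i else 0 := by
  rw [mul_apply, Finset.sum_eq_single i.rev]
  · split_ifs with hik
    · rw [hik]
    · rw [hA i.rev k (by rwa [Ne, Fin.rev_inj]), mul_zero]
  · intro j _ hj
    rw [hA i j (by rwa [Ne, ← Fin.rev_eq_iff, eq_comm]), zero_mul]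
  · simp

structure IsAntidiagTwist (V : Matrix (Fin N) (Fin N) ℂ) (θ : ℂ) : Prop where
  apply_eq_zero : ∀ i j : Fin N, i ≠ j.rev → V i j = 0
  mul_self : V * V = θ • 1
  sq : θ * θ = 1

namespace IsAntidiagTwist

variable {V : Matrix (Fin N) (Fin N) ℂ} {θ : ℂ} (hV : IsAntidiagTwist V θ)
include hV

lemma inv_eq : V⁻¹ = θ • V :=
  inv_eq_right_inv (by rw [Matrix.mul_smul, hV.mul_self, smul_smul, hV.sq, one_smul])

lemma inv_apply_eq_zero (i j : Fin N) (h : i ≠ j.rev) : V⁻¹ i j = 0 := by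
  rw [hV.inv_eq, Matrix.smul_apply, hV.apply_eq_zero i j h, smul_zero]

lemma apply_rev_mul_apply (i : Fin N) : V i i.rev * V i.rev i = θ := by
  simpa [mul_self_apply_of_antidiag hV.apply_eq_zero] using congrFun (congrFun hV.mul_self i) i

lemma inv_apply_rev_mul_apply (i : Fin N) : V⁻¹ i i.rev * V i.rev i = 1 := by
  rw [hV.inv_eq, Matrix.smul_apply, smul_eq_mul, mul_assoc, hV.apply_rev_mul_apply, hV.sq]

end IsAntidiagTwist

lemma Vplus_apply_of_eq_rev {i j : Fin N} (h : i = j.rev) : Vplus N i j = 1 :=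
  if_pos (by rw [h, Fin.val_rev]; omega)

lemma Vminus_apply_of_eq_rev {i j : Fin N} (h : i = j.rev) :
    Vminus N i j = if 2 * (i : ℕ) < N then 1 else -1 :=
  if_pos (by rw [h, Fin.val_rev]; omega)

lemma Vplus_apply_eq_zero {i j : Fin N} (h : i ≠ j.rev) : Vplus N i j = 0 :=
  if_neg fun h' => h (Fin.ext (by rw [Fin.val_rev]; omega))

lemma Vminus_apply_eq_zero {i j : Fin N} (h : i ≠ j.rev) : Vminus N i j = 0 :=
  if_neg fun h' => h (Fin.ext (by rw [Fin.val_rev]; omega))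

lemma isAntidiagTwist_Vplus : IsAntidiagTwist (Vplus N) 1 where
  apply_eq_zero _ _ := Vplus_apply_eq_zero
  mul_self := by
    ext i k
    rw [mul_self_apply_of_antidiag fun _ _ => Vplus_apply_eq_zero]
    simp [one_apply, Vplus_apply_of_eq_rev]
  sq := one_mul 1

lemma isAntidiagTwist_Vminus (hN : Even N) : IsAntidiagTwist (Vminus N) (-1) where
  apply_eq_zero _ _ := Vminus_apply_eq_zero
  mul_self := by
    ext i k
    rw [mul_self_apply_of_antidiag fun _ _ => Vminus_apply_eq_zero]
    rw [Vminus_apply_of_eq_rev (Fin.rev_rev i).symm, Vminus_apply_of_eq_rev rfl,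
      Matrix.smul_apply, one_apply, Fin.val_rev]
    obtain ⟨t, rfl⟩ := hN
    have := i.isLt
    split_ifs <;> first | omega | norm_num
  sq := by norm_num

lemma laxHat_eq_smul_Rmat (hbar : ℂ) {z : ℂ} (hz : z ≠ 0) (n : Fin ℓ) :
    laxHat N hbar z n = z • Rmat N hbar (Sum.inl ()) (Sum.inr n) z := by
  rw [Rmat, smul_sub, smul_smul, mul_div_cancel₀ _ hz]
  rfl

lemma monoHat_eq_smul_Tmono (hbar z : ℂ) {a : Fin ℓ → ℂ} (hz : ∀ n, z + a n ≠ 0) :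
    monoHat N hbar (fun n => z + a n) (List.finRange ℓ) =
      (∏ n, (z + a n)) • Tmono N ℓ hbar a z := by
  rw [Tmono, Fin.prod_univ_def, ← list_prod_map_smul, monoHat]
  exact congrArg List.prod (List.map_congr_left fun n _ => laxHat_eq_smul_Rmat hbar (hz n) n)

lemma gtransp_smul (V : Matrix (Fin N) (Fin N) ℂ) (r : ℂ)
    (M : Matrix (Unit ⊕ Fin ℓ → Fin N) (Unit ⊕ Fin ℓ → Fin N) ℂ) :
    gtransp V (Sum.inl ()) (r • M) = r • gtransp V (Sum.inl ()) M := by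
  have : ptransp (Sum.inl ()) (r • M) = r • ptransp (Sum.inl ()) M := rfl
  rw [gtransp, gtransp, this, Matrix.mul_smul, Matrix.smul_mul]

lemma Shat_eq_mul {hbar ρ lam : ℂ} {a : Fin ℓ → ℂ} (V : Matrix (Fin N) (Fin N) ℂ)
    (ζ : Fin N → ℂ) (hpol : ∀ n : Fin ℓ, lam + a n ≠ 0 ∧ -lam - hbar * ρ + a n ≠ 0) :
    Shat N ℓ hbar ρ a V ζ lam =
      monoHat N hbar (fun n => lam + a n) (List.finRange ℓ) *
        siteOp N (Sum.inl ()) (diagonal ζ) *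
          gtransp V (Sum.inl ())
            (monoHat N hbar (fun n => -lam - hbar * ρ + a n) (List.finRange ℓ)) := by
  rw [monoHat_eq_smul_Tmono hbar _ fun n => (hpol n).1,
    monoHat_eq_smul_Tmono hbar _ fun n => (hpol n).2, gtransp_smul, Matrix.smul_mul,
    Matrix.smul_mul, Matrix.mul_smul, smul_smul, Shat, Smat, Finset.prod_mul_distrib, mul_comm]

lemma vplus_eq_single [NeZero N] : vplus N ℓ = Pi.single 0 1 := by
  funext f
  rw [vplus, Pi.single_apply]
  simp only [funext_iff, Pi.zero_apply, Fin.ext_iff, Fin.val_zero]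

lemma entryOp_mulVec_vplus [NeZero N]
    (M : Matrix (Unit ⊕ Fin ℓ → Fin N) (Unit ⊕ Fin ℓ → Fin N) ℂ) (j k : Fin N) :
    entryOp N ℓ M j k *ᵥ vplus N ℓ = fun f => (M *ᵥ basisVec k 0) (withAux j f) := by
  rw [vplus_eq_single, mulVec_single_one, mulVec_basisVec]
  rfl

section Twisted

variable [NeZero N] {V : Matrix (Fin N) (Fin N) ℂ} {θ : ℂ} (hV : IsAntidiagTwist V θ) (hbar : ℂ)
  {xs : List (Fin ℓ)}
include hV

lemma gtransp_monoHat_mulVec_basisVec_zero_of_rev_ne_zero (c : Fin ℓ → ℂ) (hxs : xs.Nodup)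
    {k : Fin N} (hk : k.rev ≠ 0) :
    gtransp V (Sum.inl ()) (monoHat N hbar c xs) *ᵥ basisVec k 0 =
      (xs.map c).prod • basisVec k 0 := by
  rw [gtransp, ← mulVec_mulVec, ← mulVec_mulVec,
    siteOp_mulVec_basisVec_of_antidiag hV.apply_eq_zero, mulVec_smul,
    ptransp_monoHat_mulVec_basisVec_zero_of_ne_zero hbar c hxs hk, mulVec_smul, mulVec_smul,
    siteOp_mulVec_basisVec_of_antidiag hV.inv_apply_eq_zero, Fin.rev_rev, smul_smul, smul_smul]
  congr 1
  linear_combination (xs.map c).prod * hV.inv_apply_rev_mul_apply k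

lemma gtransp_monoHat_mulVec_basisVec_zero_of_rev_eq_zero (c : Fin ℓ → ℂ) (hxs : xs.Nodup)
    {k : Fin N} (hk : k.rev = 0) :
    gtransp V (Sum.inl ()) (monoHat N hbar c xs) *ᵥ basisVec k 0 =
      V 0 k • ((V⁻¹ k 0 * (xs.map fun n => c n - hbar).prod) • basisVec k 0 -
        hbar • ∑ i ∈ Finset.univ.erase 0, (xs.map fun n =>
          (V⁻¹ i.rev i * splitProd (fun m => c m - hbar) c xs n) •
            basisVec i.rev (Pi.single n i)).sum) := by
  have h0 : (0 : Fin N).rev = k := by rw [← hk, Fin.rev_rev]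
  rw [gtransp, ← mulVec_mulVec, ← mulVec_mulVec,
    siteOp_mulVec_basisVec_of_antidiag hV.apply_eq_zero, hk, mulVec_smul,
    ptransp_monoHat_mulVec_basisVec_zero_zero hbar c hxs, mulVec_smul, mulVec_sub, mulVec_smul,
    mulVec_smul, siteOp_mulVec_basisVec_of_antidiag hV.inv_apply_eq_zero, h0, mulVec_sum,
    smul_smul, mul_comm]
  congr 3
  refine Finset.sum_congr rfl fun i _ => ?_
  rw [mulVec_list_sum, List.map_map]
  refine congrArg List.sum (List.map_congr_left fun n _ => ?_)
  rw [Function.comp_apply, mulVec_smul, siteOp_mulVec_basisVec_of_antidiag hV.inv_apply_eq_zero,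
    smul_smul, mul_comm]

lemma twisted_mulVec_basisVec_apply_of_rev_eq_zero (u ν : Fin ℓ → ℂ) (ζ : Fin N → ℂ)
    (hxs : xs.Nodup) {k : Fin N} (hk : k.rev = 0) (hk0 : k ≠ 0) (f : Fin ℓ → Fin N) :
    ((monoHat N hbar u xs * siteOp N (Sum.inl ()) (diagonal ζ) *
        gtransp V (Sum.inl ()) (monoHat N hbar ν xs)) *ᵥ basisVec k 0) (withAux k f) =
      V 0 k * (V⁻¹ k 0 * (xs.map fun n => ν n - hbar).prod * ζ k * (xs.map u).prod +
        hbar * hbar * V⁻¹ 0 k * ζ 0 * (xs.map fun n => splitProd (fun m => ν m - hbar) ν xs n *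
          splitProd u (fun m => u m - hbar) xs n).sum) * if f = 0 then 1 else 0 := by
  have hsum : ∑ i ∈ Finset.univ.erase 0, (xs.map fun n =>
        V⁻¹ i.rev i * splitProd (fun m => ν m - hbar) ν xs n *
          (ζ i.rev * (monoHat N hbar u xs *ᵥ basisVec i.rev (Pi.single n i)) (withAux k f))).sum =
      -(hbar * V⁻¹ 0 k * ζ 0 * if f = 0 then 1 else 0) * (xs.map fun n =>
        splitProd (fun m => ν m - hbar) ν xs n * splitProd u (fun m => u m - hbar) xs n).sum := by
    rw [Finset.sum_eq_single_of_mem k (by simp [hk0]), ← List.sum_map_mul_left]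
    · refine congrArg List.sum (List.map_congr_left fun n hn => ?_)
      rw [monoHat_mulVec_basisVec_rev_single_apply hbar u hxs hk hk0 hk0 hn, if_pos rfl, hk]
      ring
    · intro i hi hik
      refine List.sum_eq_zero fun t ht => ?_
      obtain ⟨n, hn, rfl⟩ := List.mem_map.mp ht
      rw [monoHat_mulVec_basisVec_rev_single_apply hbar u hxs hk hk0 (Finset.ne_of_mem_erase hi)
        hn, if_neg hik, mul_zero, mul_zero]
  rw [← mulVec_mulVec, ← mulVec_mulVec,
    gtransp_monoHat_mulVec_basisVec_zero_of_rev_eq_zero hV hbar ν hxs hk]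
  simp only [mulVec_smul, mulVec_sub, mulVec_sum, mulVec_list_sum, List.map_map, Function.comp_def,
    siteOp_diagonal_mulVec_basisVec, Pi.smul_apply, Pi.sub_apply, Finset.sum_apply,
    Pi.list_sum_apply, smul_eq_mul]
  rw [hsum, monoHat_mulVec_basisVec_zero_apply hbar u hxs (Or.inr hk0)]
  simp only [true_and, hk0, if_false, mul_zero, sub_zero]
  split_ifs <;> ring

end Twisted

lemma Pfun_eq_prod [NeZero N] (hbar : ℂ) (a : Fin ℓ → ℂ) (k : Fin N) (z : ℂ) :
    Pfun N ℓ hbar a k z =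
      ((List.finRange ℓ).map fun n => z + a n - hbar * if k = 0 then 1 else 0).prod := by
  simp only [Pfun, Fin.prod_univ_def, Fin.val_eq_zero_iff]

lemma sigmafun_rev_of_ne_zero [NeZero N] (hbar ρ : ℂ) (a : Fin ℓ → ℂ) {k : Fin N} (hk : k ≠ 0)
    (hkr : k.rev ≠ 0) (lam : ℂ) :
    sigmafun N ℓ hbar ρ a k.rev lam = sigmafun N ℓ hbar ρ a k lam := by
  simp only [sigmafun, Pfun, Fin.rev_rev, Fin.val_eq_zero_iff, hk, hkr, if_false]

section Entries

variable [NeZero N] {hbar ρ lam θ : ℂ} {a : Fin ℓ → ℂ} {V : Matrix (Fin N) (Fin N) ℂ}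
  {ζ : Fin N → ℂ}

lemma entryOp_Shat_mulVec_vplus_of_rev_ne_zero (hV : IsAntidiagTwist V θ)
    (hpol : ∀ n : Fin ℓ, lam + a n ≠ 0 ∧ -lam - hbar * ρ + a n ≠ 0) {j k : Fin N}
    (hk : k.rev ≠ 0) (hjk : k = 0 ∨ j ≠ 0) :
    entryOp N ℓ (Shat N ℓ hbar ρ a V ζ lam) j k *ᵥ vplus N ℓ =
      (if j = k then ζ k * sigmafun N ℓ hbar ρ a k lam else 0) • vplus N ℓ := by
  rw [entryOp_mulVec_vplus, Shat_eq_mul V ζ hpol, ← mulVec_mulVec, ← mulVec_mulVec,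
    gtransp_monoHat_mulVec_basisVec_zero_of_rev_ne_zero hV hbar _ (List.nodup_finRange ℓ) hk,
    mulVec_smul, siteOp_diagonal_mulVec_basisVec, mulVec_smul, mulVec_smul]
  funext f
  rw [Pi.smul_apply, Pi.smul_apply, Pi.smul_apply,
    monoHat_mulVec_basisVec_zero_apply hbar _ (List.nodup_finRange ℓ) hjk, vplus_eq_single,
    sigmafun, Pfun_eq_prod, Pfun_eq_prod, if_neg hk]
  by_cases hjk' : j = k <;> by_cases hf : f = 0 <;> simp [hjk', hf]
  ring

lemma entryOp_Shat_mulVec_vplus_of_rev_eq_zero (hV : IsAntidiagTwist V θ) {ε : ℂ}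
    (hpol : ∀ n : Fin ℓ, lam + a n ≠ 0 ∧ -lam - hbar * ρ + a n ≠ 0)
    (hcr : 2 * lam + hbar * ρ ≠ 0) {k : Fin N} (hk : k.rev = 0) (hk0 : k ≠ 0)
    (hV0 : V 0 k = 1) (hζ : ζ 0 = ε * ζ k) :
    entryOp N ℓ (Shat N ℓ hbar ρ a V ζ lam) k k *ᵥ vplus N ℓ =
      (ζ k / (2 * lam + hbar * ρ) *
        ((2 * lam + hbar * (ρ - θ * ε)) * sigmafun N ℓ hbar ρ a k lam +
          θ * ε * hbar * sigmafun N ℓ hbar ρ a k.rev lam)) • vplus N ℓ := by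
  have hVk0 : V⁻¹ k 0 = 1 := by
    have := hV.apply_rev_mul_apply k
    rw [hk, hV0, mul_one] at this
    rw [hV.inv_eq, Matrix.smul_apply, this, smul_eq_mul, hV.sq]
  have hV0k : V⁻¹ 0 k = θ := by rw [hV.inv_eq, Matrix.smul_apply, hV0, smul_eq_mul, mul_one]
  set u : Fin ℓ → ℂ := fun n => lam + a n
  set ν : Fin ℓ → ℂ := fun n => -lam - hbar * ρ + a n
  have htele : ((List.finRange ℓ).map fun n => (ν n - hbar) * u n).prod -
      ((List.finRange ℓ).map fun n => ν n * (u n - hbar)).prod =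
        -(hbar * (2 * lam + hbar * ρ)) * ((List.finRange ℓ).map fun n =>
          splitProd (fun m => (ν m - hbar) * u m) (fun m => ν m * (u m - hbar))
            (List.finRange ℓ) n).sum := by
    rw [prod_map_sub_prod_map_eq_sum _ _ (List.nodup_finRange ℓ), ← List.sum_map_mul_left]
    exact congrArg List.sum (List.map_congr_left fun n _ => by simp only [u, ν]; ring)
  rw [List.prod_map_mul, List.prod_map_mul] at htele
  rw [entryOp_mulVec_vplus, Shat_eq_mul V ζ hpol]
  funext f
  rw [twisted_mulVec_basisVec_apply_of_rev_eq_zero hV hbar u ν ζ (List.nodup_finRange ℓ) hk hk0 f,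
    Pi.smul_apply, vplus_eq_single, hV0, hVk0, hV0k, hζ, sigmafun, sigmafun, Fin.rev_rev,
    Pfun_eq_prod, Pfun_eq_prod, Pfun_eq_prod, Pfun_eq_prod, hk]
  simp only [splitProd_mul, if_neg hk0, if_true, mul_zero, sub_zero, mul_one]
  by_cases hf : f = 0
  · simp only [hf, Pi.single_eq_same, if_true, smul_eq_mul, mul_one]
    rw [div_mul_eq_mul_div, eq_div_iff hcr]
    simp only [u, ν] at htele ⊢
    linear_combination hbar * θ * ε * ζ k * htele
  · simp [hf]

end Entries

end TwistedMonodromy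

open TwistedMonodromy

theorem twisted_monodromy_highest_weight_general (N ℓ : ℕ) (hN : 2 ≤ N)
    (hbar : ℂ) (ρ θ ε : ℂ)
    (V : Matrix (Fin N) (Fin N) ℂ)
    (hV : (V = Vplus N ∧ θ = 1) ∨ (Even N ∧ V = Vminus N ∧ θ = -1))
    (ζ : Fin N → ℂ) (hζ : ∀ k : Fin N, ζ k.rev = ε * ζ k)
    (a : Fin ℓ → ℂ) (lam : ℂ) (hcr : 2 * lam + hbar * ρ ≠ 0)
    (hpol : ∀ n : Fin ℓ, lam + a n ≠ 0 ∧ -lam - hbar * ρ + a n ≠ 0) :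
    (∀ j k : Fin N, (k : ℕ) < (j : ℕ) →
        (entryOp N ℓ (Shat N ℓ hbar ρ a V ζ lam) j k).mulVec (vplus N ℓ) = 0) ∧
    (∀ k : Fin N, 2 * ((k : ℕ) + 1) ≤ N + 1 →
        (entryOp N ℓ (Shat N ℓ hbar ρ a V ζ lam) k k).mulVec (vplus N ℓ) =
          (ζ k * sigmafun N ℓ hbar ρ a k lam) • vplus N ℓ) ∧
    (∀ k : Fin N, N + 2 ≤ 2 * ((k : ℕ) + 1) →
        (entryOp N ℓ (Shat N ℓ hbar ρ a V ζ lam) k k).mulVec (vplus N ℓ) =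
          (ζ k / (2 * lam + hbar * ρ) *
            ((2 * lam + hbar * (ρ - θ * ε)) * sigmafun N ℓ hbar ρ a k lam +
              θ * ε * hbar * sigmafun N ℓ hbar ρ a k.rev lam)) • vplus N ℓ) := by
  have : NeZero N := ⟨by omega⟩
  have hrev (k : Fin N) : k.rev = 0 ↔ (k : ℕ) = N - 1 := by
    rw [Fin.ext_iff, Fin.val_rev, Fin.val_zero]
    omega
  obtain ⟨hVt, hV0⟩ : IsAntidiagTwist V θ ∧ ∀ k : Fin N, k.rev = 0 → V 0 k = 1 := by
    rcases hV with ⟨rfl, rfl⟩ | ⟨hNe, rfl, rfl⟩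
    · exact ⟨isAntidiagTwist_Vplus, fun k hk => Vplus_apply_of_eq_rev hk.symm⟩
    · refine ⟨isAntidiagTwist_Vminus hNe, fun k hk => ?_⟩
      rw [Vminus_apply_of_eq_rev hk.symm, Fin.val_zero, if_pos (by omega)]
  refine ⟨fun j k hkj => ?_, fun k hk => ?_, fun k hk => ?_⟩
  · have hjk : j ≠ k := fun h => by simp [h] at hkj
    rw [entryOp_Shat_mulVec_vplus_of_rev_ne_zero hVt hpol (by rw [Ne, hrev]; omega)
      (Or.inr fun h => by simp [h] at hkj), if_neg hjk, zero_smul]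
  · rw [entryOp_Shat_mulVec_vplus_of_rev_ne_zero hVt hpol (by rw [Ne, hrev]; omega)
      (eq_or_ne k 0), if_pos rfl]
  · have hk0 : k ≠ 0 := fun h => by simp [h] at hk; omega
    by_cases hkr : k.rev = 0
    · exact entryOp_Shat_mulVec_vplus_of_rev_eq_zero hVt hpol hcr hkr hk0 (hV0 k hkr)
        (by rw [← hζ k, hkr])
    · rw [entryOp_Shat_mulVec_vplus_of_rev_ne_zero hVt hpol hkr (Or.inr hk0), if_pos rfl,
        sigmafun_rev_of_ne_zero hbar ρ a hk0 hkr]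
      congr 1
      field_simp
      ring

/-- highest-weight property of the twisted monodromy matrix on
fundamental sites:
`Ŝ_{jk}(λ)v⁺ = 0` for `k < j`; `Ŝ_{kk}(λ)v⁺ = ζ_k σ_k(λ) v⁺` for `1 ≤ k ≤ (N+1)/2`;
and `Ŝ_{kk}(λ)v⁺ = (ζ_k/(2λ+ħρ))[(2λ+ħ(ρ−θε))σ_k(λ) + θεħ σ_{k̄}(λ)] v⁺`
for `N/2 + 1 ≤ k ≤ N`. -/
theorem twisted_monodromy_highest_weight (N ℓ : ℕ) (hN : 2 ≤ N) (hℓ : 1 ≤ ℓ)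
    (hbar : ℂ) (hhbar : hbar ≠ 0) (ρ θ ε : ℂ)
    (V : Matrix (Fin N) (Fin N) ℂ)
    (hV : (V = Vplus N ∧ θ = 1) ∨ (Even N ∧ V = Vminus N ∧ θ = -1))
    (hε : ε = 1 ∨ ε = -1)
    (ζ : Fin N → ℂ) (hζ0 : ∀ k, ζ k ≠ 0) (hζ : ∀ k : Fin N, ζ k.rev = ε * ζ k)
    (a : Fin ℓ → ℂ) (lam : ℂ) (hcr : 2 * lam + hbar * ρ ≠ 0)
    (hpol : ∀ n : Fin ℓ, lam + a n ≠ 0 ∧ -lam - hbar * ρ + a n ≠ 0) :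
    (∀ j k : Fin N, (k : ℕ) < (j : ℕ) →
        (entryOp N ℓ (Shat N ℓ hbar ρ a V ζ lam) j k).mulVec (vplus N ℓ) = 0) ∧
    (∀ k : Fin N, 2 * ((k : ℕ) + 1) ≤ N + 1 →
        (entryOp N ℓ (Shat N ℓ hbar ρ a V ζ lam) k k).mulVec (vplus N ℓ) =
          (ζ k * sigmafun N ℓ hbar ρ a k lam) • vplus N ℓ) ∧
    (∀ k : Fin N, N + 2 ≤ 2 * ((k : ℕ) + 1) →
        (entryOp N ℓ (Shat N ℓ hbar ρ a V ζ lam) k k).mulVec (vplus N ℓ) =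
          (ζ k / (2 * lam + hbar * ρ) *
            ((2 * lam + hbar * (ρ - θ * ε)) * sigmafun N ℓ hbar ρ a k lam +
              θ * ε * hbar * sigmafun N ℓ hbar ρ a k.rev lam)) • vplus N ℓ) :=
  twisted_monodromy_highest_weight_general N ℓ hN hbar ρ θ ε V hV ζ hζ a lam hcr hpol
end
end

section
/- Crossing symmetry of the functions σ̃_k: suppose σ₁, …, σ_N : ℂ → ℂ satisfy σ_{N+1−k}(−λ−ħρ) = σ_k(λ) for all λ and all 1 ≤ k ≤ N. Define σ̃_k(λ) = ∏_{j=1}^{k−1} σ_j(−λ − ħ(N/2 + ρ − j)) · ∏_{j=k+1}^{N} σ_j(−λ − ħ(N/2 + ρ − j + 1)). Then σ̃_{N+1−k}(−λ−ħρ) = σ̃_k(λ) for all λ ∈ ℂ and all 1 ≤ k ≤ N. -/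
/-! The reflection `j ↦ N + 1 - j` carries the index set of each of the two products defining
`σ̃_{N+1-k}` onto that of the other product defining `σ̃_k`, and the crossing relation of `σ_j`
matches the factors one by one. -/

open Finset

noncomputable section

def sigmaTilde (N : ℕ) (hbar ρ : ℂ) (σ : ℕ → ℂ → ℂ) (k : ℕ) (lam : ℂ) : ℂ :=
  (∏ j ∈ Icc 1 (k - 1), σ j (-lam - hbar * ((N : ℂ) / 2 + ρ - (j : ℂ)))) *
  (∏ j ∈ Icc (k + 1) N, σ j (-lam - hbar * ((N : ℂ) / 2 + ρ - (j : ℂ) + 1)))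

theorem Finset.prod_Icc_reflect {M : Type*} [CommMonoid M] (f : ℕ → M) {a b n : ℕ}
    (h : b < n) :
    ∏ j ∈ Icc a b, f j = ∏ j ∈ Icc (n - b) (n - a), f (n - j) := by
  refine prod_nbij' (fun j ↦ n - j) (fun j ↦ n - j) (fun j hj ↦ ?_) (fun j hj ↦ ?_)
    (fun j hj ↦ ?_) (fun j hj ↦ ?_) (fun j hj ↦ congrArg f ?_) <;>
    simp only [mem_Icc] at hj ⊢ <;> omega

theorem prod_Icc_crossing {N : ℕ} {hbar ρ : ℂ} {σ : ℕ → ℂ → ℂ}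
    (hcross : ∀ k ∈ Icc 1 N, ∀ lam : ℂ, σ (N + 1 - k) (-lam - hbar * ρ) = σ k lam)
    {a b : ℕ} (ha : 1 ≤ a) (hb : b ≤ N) {u v : ℕ → ℂ}
    (huv : ∀ j ∈ Icc a b, u j = -v (N + 1 - j) - hbar * ρ) :
    ∏ j ∈ Icc a b, σ j (u j) = ∏ j ∈ Icc (N + 1 - b) (N + 1 - a), σ j (v j) := by
  rw [prod_Icc_reflect _ (n := N + 1) (by omega)]
  refine prod_congr rfl fun j hj ↦ ?_
  obtain ⟨hj1, hj2⟩ := mem_Icc.mp hj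
  rw [huv _ (mem_Icc.mpr ⟨by omega, by omega⟩), Nat.sub_sub_self (by omega),
    hcross j (mem_Icc.mpr ⟨by omega, by omega⟩)]

theorem sigmaTilde_crossing_general (N : ℕ) (hbar : ℂ)
    (ρ : ℂ) (σ : ℕ → ℂ → ℂ)
    (hcross : ∀ k ∈ Icc 1 N, ∀ lam : ℂ, σ (N + 1 - k) (-lam - hbar * ρ) = σ k lam) :
    ∀ k ∈ Icc 1 N, ∀ lam : ℂ,
      sigmaTilde N hbar ρ σ (N + 1 - k) (-lam - hbar * ρ) =
        sigmaTilde N hbar ρ σ k lam := by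
  intro k hk lam
  obtain ⟨hk1, hkN⟩ := mem_Icc.mp hk
  have hcast : ∀ j ≤ N, ((N + 1 - j : ℕ) : ℂ) = N + 1 - j := fun j hj ↦ by
    rw [Nat.cast_sub (by omega)]; push_cast; ring
  rw [sigmaTilde, sigmaTilde, mul_comm]
  congr 1
  · convert prod_Icc_crossing hcross (a := N + 1 - k + 1) (b := N) (by omega) le_rfl ?_ using 2
    · congr 1 <;> omega
    · intro j hj
      rw [hcast j (mem_Icc.mp hj).2]
      ring
  · convert prod_Icc_crossing hcross (a := 1) (b := N + 1 - k - 1) le_rfl (by omega) ?_ using 2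
    · congr 1; omega
    · intro j hj
      rw [hcast j (by simp only [mem_Icc] at hj; omega)]
      ring

/-- crossing symmetry of `σ̃`: if `σ_{k̄}(−λ−ħρ) = σ_k(λ)`
(with `k̄ = N+1−k`), then `σ̃_{k̄}(−λ−ħρ) = σ̃_k(λ)`. -/
theorem sigmaTilde_crossing (N : ℕ) (hN : 2 ≤ N) (hbar : ℂ) (hhbar : hbar ≠ 0)
    (ρ : ℂ) (σ : ℕ → ℂ → ℂ)
    (hcross : ∀ k ∈ Icc 1 N, ∀ lam : ℂ, σ (N + 1 - k) (-lam - hbar * ρ) = σ k lam) :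
    ∀ k ∈ Icc 1 N, ∀ lam : ℂ,
      sigmaTilde N hbar ρ σ (N + 1 - k) (-lam - hbar * ρ) =
        sigmaTilde N hbar ρ σ k lam :=
  sigmaTilde_crossing_general N hbar ρ σ hcross
end
end
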